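/- arXiv:2403.18375 — 6 statements merged into one kernel-verified Lean document; each statement's English description precedes it below -/
import Mathlib

section
/- Let U ≥ 2, let w, g_1, …, g_U be vectors in a real inner product space with ‖g_u‖ ≤ G for all u, let η ≥ 0, and set x_u = w − η g_u and x̄ = (1/U) Σ_{u=1}^U x_u. Let K ∈ {1, …, U} and let S be a random subset of {1, …, U} uniformly distributed over all K-element subsets. Then E[‖(1/K) Σ_{u∈S} x_u − x̄‖²] ≤ (U/(K(U − 1))) · (1 − K/U) · 4η²G². -/
open MeasureTheory ProbabilityTheory Finset
open scoped ENNReal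


lemma count_mem_powersetCard {α : Type*} [DecidableEq α] (s : Finset α) (u : α) (hu : u ∈ s)
    (K : ℕ) (hK : 1 ≤ K) :
    #((Finset.powersetCard K s).filter (fun A => u ∈ A))
      = (#s - 1).choose (K - 1) := by
  rw [show #s - 1 = #(s.erase u) from (Finset.card_erase_of_mem hu).symm,
    ← Finset.card_powersetCard (K - 1) (s.erase u)]
  apply Finset.card_nbij' (fun A => A.erase u) (fun B => insert u B)
  · intro A hA
    simp only [Finset.mem_coe, Finset.mem_filter, Finset.mem_powersetCard] at hA ⊢
    obtain ⟨⟨hAs, hAcard⟩, huA⟩ := hA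
    refine ⟨fun x hx => ?_, by rw [Finset.card_erase_of_mem huA, hAcard]⟩
    exact Finset.mem_erase.2 ⟨(Finset.mem_erase.1 hx).1, hAs (Finset.mem_erase.1 hx).2⟩
  · intro B hB
    rw [Finset.mem_coe, Finset.mem_powersetCard] at hB
    obtain ⟨hBs, hBcard⟩ := hB
    have huB : u ∉ B := fun h => (Finset.mem_erase.1 (hBs h)).1 rfl
    simp only [Finset.mem_coe, Finset.mem_filter, Finset.mem_powersetCard]
    refine ⟨⟨Finset.insert_subset hu (hBs.trans (Finset.erase_subset u s)), ?_⟩,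
      Finset.mem_insert_self u B⟩
    rw [Finset.card_insert_of_notMem huB, hBcard]
    have := Finset.card_le_card hBs
    omega
  · intro A hA
    simp only [Finset.mem_coe, Finset.mem_filter] at hA
    exact Finset.insert_erase hA.2
  · intro B hB
    rw [Finset.mem_coe, Finset.mem_powersetCard] at hB
    have huB : u ∉ B := fun h => (Finset.mem_erase.1 (hB.1 h)).1 rfl
    exact Finset.erase_insert huB

open scoped RealInnerProductSpace in
lemma sum_sq_norm_powersetCard {U : ℕ} {H : Type*} [NormedAddCommGroup H]
    [InnerProductSpace ℝ H] (y : Fin U → H) (hy : ∑ u, y u = 0) (K : ℕ) (hK1 : 1 ≤ K) :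
    ∑ A ∈ Finset.powersetCard K (Finset.univ : Finset (Fin U)), ‖∑ u ∈ A, y u‖ ^ 2
      = ((U - 2).choose (K - 1) : ℝ) * ∑ u, ‖y u‖ ^ 2 := by
  classical
  set P := Finset.powersetCard K (Finset.univ : Finset (Fin U)) with hPdef
  set c : Fin U → Fin U → ℝ := fun u v => ⟪y u, y v⟫ with hc
  set D : ℝ := ((U - 1).choose (K - 1) : ℝ) with hD
  set M : ℝ := ((U - 2).choose (K - 1) : ℝ) with hM
  have hT0 : ∑ u, ∑ v, c u v = 0 := by
    simp_rw [hc, ← inner_sum, ← sum_inner, hy, inner_zero_left]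
  have hdiag : ∀ u, c u u = ‖y u‖ ^ 2 := fun u => real_inner_self_eq_norm_sq (y u)
  have e1 : ∀ (A : Finset (Fin U)) (h : Fin U → ℝ),
      ∑ u ∈ A, h u = ∑ u, if u ∈ A then h u else 0 := fun A h => by
    rw [Finset.sum_ite_mem, Finset.univ_inter]
  have step1 : ∀ A ∈ P, ‖∑ u ∈ A, y u‖ ^ 2
      = ∑ u, ∑ v, (if u ∈ A ∧ v ∈ A then c u v else 0) := by
    intro A _
    rw [← real_inner_self_eq_norm_sq, sum_inner]
    simp_rw [inner_sum]
    rw [e1 A (fun u => ∑ v ∈ A, c u v)]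
    refine Finset.sum_congr rfl fun u _ => ?_
    by_cases hu : u ∈ A
    · simp only [hu, if_true, true_and]
      exact e1 A _
    · simp [hu]
  have hN1 : ∀ u : Fin U, #(P.filter fun A => u ∈ A) = (U - 1).choose (K - 1) := by
    intro u
    rw [hPdef, count_mem_powersetCard Finset.univ u (Finset.mem_univ u) K hK1,
      Finset.card_univ, Fintype.card_fin]
  have hNdiag : ∀ u : Fin U, (#(P.filter fun A => u ∈ A ∧ u ∈ A) : ℝ) = D := by
    intro u
    simp only [and_self]
    rw [hN1 u]
  have hNoff : ∀ u v : Fin U, v ≠ u →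
      (#(P.filter fun A => u ∈ A ∧ v ∈ A) : ℝ) = D - M := by
    intro u v hvu
    have hsplit := Finset.card_filter_add_card_filter_not
      (s := P.filter fun A => u ∈ A) (p := fun A => v ∈ A)
    rw [Finset.filter_filter, Finset.filter_filter] at hsplit
    have h2 : (P.filter fun A => u ∈ A ∧ ¬ v ∈ A)
        = ((Finset.powersetCard K (Finset.univ.erase v)).filter fun A => u ∈ A) := by
      ext A
      simp only [Finset.mem_filter, Finset.mem_powersetCard, Finset.subset_erase, hPdef,
        Finset.subset_univ, true_and]
      tauto
    have h3 : #(P.filter fun A => u ∈ A ∧ ¬ v ∈ A) = (U - 2).choose (K - 1) := by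
      rw [h2, count_mem_powersetCard _ u
        (Finset.mem_erase.2 ⟨fun h => hvu h.symm, Finset.mem_univ u⟩) K hK1,
        Finset.card_erase_of_mem (Finset.mem_univ v), Finset.card_univ, Fintype.card_fin,
        Nat.sub_sub]
    rw [h3, hN1 u] at hsplit
    rw [hD, hM]
    push_cast [← hsplit]
    ring
  calc ∑ A ∈ P, ‖∑ u ∈ A, y u‖ ^ 2
      = ∑ A ∈ P, ∑ u, ∑ v, (if u ∈ A ∧ v ∈ A then c u v else 0) :=
        Finset.sum_congr rfl step1
    _ = ∑ u, ∑ v, ∑ A ∈ P, (if u ∈ A ∧ v ∈ A then c u v else 0) := by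
        rw [Finset.sum_comm]
        exact Finset.sum_congr rfl fun u _ => Finset.sum_comm
    _ = ∑ u, ∑ v, (#(P.filter fun A => u ∈ A ∧ v ∈ A) : ℝ) * c u v := by
        refine Finset.sum_congr rfl fun u _ => Finset.sum_congr rfl fun v _ => ?_
        rw [← Finset.sum_filter, Finset.sum_const, nsmul_eq_mul]
    _ = ∑ u, (D * c u u + (D - M) * (∑ v, c u v - c u u)) := by
        refine Finset.sum_congr rfl fun u _ => ?_
        rw [← Finset.add_sum_erase _ _ (Finset.mem_univ u), hNdiag u]
        congr 1
        have herase : c u u + ∑ v ∈ Finset.univ.erase u, c u v = ∑ v, c u v :=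
          Finset.add_sum_erase _ _ (Finset.mem_univ u)
        rw [Finset.sum_congr rfl (fun v hv => by
          rw [hNoff u v (Finset.mem_erase.1 hv).1]), ← Finset.mul_sum]
        congr 1
        linarith
    _ = M * ∑ u, ‖y u‖ ^ 2 := by
        simp_rw [← hdiag]
        rw [Finset.sum_add_distrib, ← Finset.mul_sum, ← Finset.mul_sum,
          Finset.sum_sub_distrib, hT0]
        ring

lemma choose_ratio {U K : ℕ} (hU : 2 ≤ U) (hK1 : 1 ≤ K) (hKU : K ≤ U) :
    (K : ℝ) * ((U : ℝ) - K) * (U.choose K : ℝ)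
      = (U : ℝ) * ((U : ℝ) - 1) * ((U - 2).choose (K - 1) : ℝ) := by
  obtain ⟨U2, rfl⟩ : ∃ m, U = m + 2 := ⟨U - 2, by omega⟩
  obtain ⟨K1, rfl⟩ : ∃ m, K = m + 1 := ⟨K - 1, by omega⟩
  have hc : K1 ≤ U2 + 1 := by omega
  have A := Nat.add_one_mul_choose_eq (U2 + 1) K1
  have B := Nat.choose_mul_succ_eq U2 K1
  have A' : ((U2 : ℝ) + 2) * ((U2 + 1).choose K1 : ℝ)
      = ((U2 + 2).choose (K1 + 1) : ℝ) * ((K1 : ℝ) + 1) := by exact_mod_cast A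
  have B' : (U2.choose K1 : ℝ) * ((U2 : ℝ) + 1)
      = ((U2 + 1).choose K1 : ℝ) * (((U2 : ℝ) + 1) - K1) := by
    have := congrArg (Nat.cast : ℕ → ℝ) B
    push_cast [Nat.cast_sub hc] at this
    linarith
  have hs1 : U2 + 2 - 2 = U2 := by omega
  have hs2 : K1 + 1 - 1 = K1 := by omega
  rw [hs1, hs2]
  push_cast
  nlinarith [A', B']
open MeasureTheory ProbabilityTheory Finset
open scoped ENNReal


/-- **Bounded variance of the sample mean of one-step SGD updates.**
Let `U ≥ 2`, let `w, g 1, …, g U` be fixed vectors in a real inner product space with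
`‖g u‖ ≤ G`, let `η ≥ 0`, and set `x u = w − η g u` with average `x̄ = (1/U) ∑ u, x u`.
If `K ∈ {1, …, U}` and `S` is a random subset of `{1, …, U}` uniformly distributed over
all `K`-element subsets, then
`E[‖(1/K) ∑_{u∈S} x u − x̄‖²] ≤ (U/(K(U − 1))) · (1 − K/U) · 4η²G²`. -/
theorem uniform_subset_sample_mean_variance_le
    {Ω : Type*} [MeasurableSpace Ω] (μ : Measure Ω) [IsProbabilityMeasure μ]
    {H : Type*} [NormedAddCommGroup H] [InnerProductSpace ℝ H] [CompleteSpace H]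
    (U : ℕ) (hU : 2 ≤ U)
    (w : H) (g : Fin U → H) (G : ℝ) (hg : ∀ u, ‖g u‖ ≤ G)
    (η : ℝ) (hη : 0 ≤ η)
    (x : Fin U → H) (hx : ∀ u, x u = w - η • g u)
    (xbar : H) (hxbar : xbar = (U : ℝ)⁻¹ • ∑ u, x u)
    (K : ℕ) (hK : K ∈ Finset.Icc 1 U)
    (S : Ω → Finset (Fin U))
    (hS_meas : ∀ A : Finset (Fin U), MeasurableSet {ω | S ω = A})
    (hS_unif : ∀ A : Finset (Fin U), A.card = K →
      μ {ω | S ω = A} = ((U.choose K : ℝ≥0∞))⁻¹) :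
    ∫ ω, ‖(K : ℝ)⁻¹ • ∑ u ∈ S ω, x u - xbar‖ ^ 2 ∂μ
      ≤ ((U : ℝ) / (K * ((U : ℝ) - 1))) * (1 - (K : ℝ) / (U : ℝ)) * (4 * η ^ 2 * G ^ 2) := by
  classical
  obtain ⟨hK1, hKU⟩ := Finset.mem_Icc.1 hK
  have hU0 : (0 : ℝ) < U := by
    have : 0 < U := by omega
    exact_mod_cast this
  have hK0 : (0 : ℝ) < K := by exact_mod_cast hK1
  set P := Finset.powersetCard K (Finset.univ : Finset (Fin U)) with hPdef
  set f : Finset (Fin U) → ℝ := fun A => ‖(K : ℝ)⁻¹ • ∑ u ∈ A, x u - xbar‖ ^ 2 with hfdef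
  -- integral equals weighted sum
  have hrep : ∀ ω, f (S ω)
      = ∑ A : Finset (Fin U), Set.indicator {ω' | S ω' = A} (fun _ => f A) ω := by
    intro ω
    rw [Finset.sum_congr rfl (fun A _ => Set.indicator_apply _ _ _)]
    simp only [Set.mem_setOf_eq]
    rw [Finset.sum_ite_eq]
    simp
  have hint : ∫ ω, f (S ω) ∂μ
      = ∑ A : Finset (Fin U), (μ {ω | S ω = A}).toReal * f A := by
    simp_rw [hrep]
    rw [integral_finset_sum _ (fun A _ => (integrable_const (f A)).indicator (hS_meas A))]
    refine Finset.sum_congr rfl fun A _ => ?_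
    rw [integral_indicator_const _ (hS_meas A), smul_eq_mul, measureReal_def]
  -- measures of non-K-sets vanish
  have hCne : (U.choose K : ℝ≥0∞) ≠ 0 := by exact_mod_cast (Nat.choose_pos hKU).ne'
  have hsumP : ∑ A ∈ P, μ {ω | S ω = A} = 1 := by
    have hcardP : #P = U.choose K := by
      rw [hPdef, Finset.card_powersetCard, Finset.card_univ, Fintype.card_fin]
    rw [Finset.sum_congr rfl (fun A hA => hS_unif A (Finset.mem_powersetCard.1 hA).2),
      Finset.sum_const, hcardP, nsmul_eq_mul]
    exact ENNReal.mul_inv_cancel hCne (ENNReal.natCast_ne_top _)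
  have huniv_le : ∑ A : Finset (Fin U), μ {ω | S ω = A} ≤ 1 := by
    rw [← measure_biUnion_finset ?_ (fun A _ => hS_meas A)]
    · exact (measure_mono (Set.subset_univ _)).trans_eq measure_univ
    · intro A _ B _ hAB
      exact Set.disjoint_left.2 fun ω h1 h2 => hAB (by rw [← h1, ← h2])
  have hzero : ∀ A, A ∉ P → μ {ω | S ω = A} = 0 := by
    intro A hA
    have hsplit := Finset.sum_sdiff (Finset.subset_univ P)
      (f := fun B => μ {ω | S ω = B})
    rw [hsumP] at hsplit
    have hle : (∑ B ∈ Finset.univ \ P, μ {ω | S ω = B}) + 1 ≤ 0 + 1 := by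
      rw [hsplit, zero_add]; exact huniv_le
    have hsd : ∑ B ∈ Finset.univ \ P, μ {ω | S ω = B} = 0 :=
      le_antisymm ((ENNReal.add_le_add_iff_right ENNReal.one_ne_top).1 hle) zero_le
    have hsingle := Finset.single_le_sum (f := fun B => μ {ω | S ω = B})
      (fun B _ => zero_le) (Finset.mem_sdiff.2 ⟨Finset.mem_univ A, hA⟩)
    exact le_antisymm (hsingle.trans hsd.le) zero_le
  have hPsum : ∫ ω, f (S ω) ∂μ = ∑ A ∈ P, ((U.choose K : ℝ))⁻¹ * f A := by
    rw [hint, ← Finset.sum_subset (Finset.subset_univ P)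
      (fun A _ hA => by rw [hzero A hA]; simp)]
    refine Finset.sum_congr rfl fun A hA => ?_
    rw [hS_unif A (Finset.mem_powersetCard.1 hA).2, ENNReal.toReal_inv]
    simp
  -- centered vectors
  set y : Fin U → H := fun u => x u - xbar with hydef
  have hsumy : ∑ u, y u = 0 := by
    simp only [hydef]
    rw [Finset.sum_sub_distrib, Finset.sum_const, Finset.card_univ, Fintype.card_fin, hxbar,
      ← Nat.cast_smul_eq_nsmul ℝ, smul_smul, mul_inv_cancel₀ hU0.ne', one_smul, sub_self]
  have hfA : ∀ A ∈ P, f A = ((K : ℝ)⁻¹) ^ 2 * ‖∑ u ∈ A, y u‖ ^ 2 := by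
    intro A hA
    have hcard : #A = K := (Finset.mem_powersetCard.1 hA).2
    have hsm : (K : ℝ)⁻¹ • ∑ u ∈ A, x u - xbar = (K : ℝ)⁻¹ • ∑ u ∈ A, y u := by
      simp only [hydef]
      rw [Finset.sum_sub_distrib, Finset.sum_const, hcard, smul_sub,
        ← Nat.cast_smul_eq_nsmul ℝ, smul_smul, inv_mul_cancel₀ hK0.ne', one_smul]
    simp only [hfdef]
    rw [hsm, norm_smul, mul_pow, Real.norm_eq_abs, abs_of_nonneg (by positivity)]
  -- norm bound on y
  have hG0 : (0 : ℝ) ≤ G := le_trans (norm_nonneg _) (hg ⟨0, by omega⟩)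
  have hwx : w - xbar = (U : ℝ)⁻¹ • ∑ v, η • g v := by
    rw [hxbar]
    have hsx : ∑ u, x u = (U : ℕ) • w - ∑ v, η • g v := by
      simp_rw [hx]
      rw [Finset.sum_sub_distrib, Finset.sum_const, Finset.card_univ, Fintype.card_fin]
    rw [hsx, smul_sub, ← Nat.cast_smul_eq_nsmul ℝ, smul_smul, inv_mul_cancel₀ hU0.ne',
      one_smul, sub_sub_cancel]
  have hynorm : ∀ u, ‖y u‖ ≤ 2 * (η * G) := by
    intro u
    have h1 : ‖x u - w‖ ≤ η * G := by
      rw [hx u, sub_sub_cancel_left, norm_neg, norm_smul, Real.norm_eq_abs, abs_of_nonneg hη]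
      exact mul_le_mul_of_nonneg_left (hg u) hη
    have h2 : ‖w - xbar‖ ≤ η * G := by
      rw [hwx, norm_smul, Real.norm_eq_abs, abs_of_nonneg (by positivity)]
      have hb : ‖∑ v, η • g v‖ ≤ (U : ℝ) * (η * G) := by
        refine (norm_sum_le _ _).trans ?_
        calc ∑ v, ‖η • g v‖ ≤ ∑ _v : Fin U, η * G := by
              refine Finset.sum_le_sum fun v _ => ?_
              rw [norm_smul, Real.norm_eq_abs, abs_of_nonneg hη]
              exact mul_le_mul_of_nonneg_left (hg v) hη
          _ = (U : ℝ) * (η * G) := by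
              rw [Finset.sum_const, Finset.card_univ, Fintype.card_fin, nsmul_eq_mul]
      calc (U : ℝ)⁻¹ * ‖∑ v, η • g v‖ ≤ (U : ℝ)⁻¹ * ((U : ℝ) * (η * G)) :=
            mul_le_mul_of_nonneg_left hb (by positivity)
        _ = η * G := by field_simp
    calc ‖y u‖ = ‖(x u - w) + (w - xbar)‖ := by rw [hydef]; congr 1; abel
      _ ≤ ‖x u - w‖ + ‖w - xbar‖ := norm_add_le _ _
      _ ≤ η * G + (η * G) := add_le_add h1 h2
      _ = 2 * (η * G) := by ring
  have hT : ∑ u, ‖y u‖ ^ 2 ≤ (U : ℝ) * (4 * η ^ 2 * G ^ 2) := by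
    calc ∑ u, ‖y u‖ ^ 2 ≤ ∑ _u : Fin U, (2 * (η * G)) ^ 2 := by
          refine Finset.sum_le_sum fun u _ => ?_
          have := hynorm u
          nlinarith [norm_nonneg (y u)]
      _ = (U : ℝ) * (4 * η ^ 2 * G ^ 2) := by
          rw [Finset.sum_const, Finset.card_univ, Fintype.card_fin, nsmul_eq_mul]; ring
  -- coefficient identity
  have hC0 : (0 : ℝ) < (U.choose K : ℝ) := by exact_mod_cast Nat.choose_pos hKU
  have hU1 : (0 : ℝ) < (U : ℝ) - 1 := by
    have : (2 : ℝ) ≤ (U : ℝ) := by exact_mod_cast hU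
    linarith
  have hid := choose_ratio hU hK1 hKU
  have hM0 : (0 : ℝ) ≤ ((U - 2).choose (K - 1) : ℝ) := by positivity
  have hcoef : ((U.choose K : ℝ))⁻¹ * ((K : ℝ)⁻¹) ^ 2 * (((U - 2).choose (K - 1) : ℝ) * (U : ℝ))
      = ((U : ℝ) / (K * ((U : ℝ) - 1))) * (1 - (K : ℝ) / (U : ℝ)) := by
    field_simp
    linear_combination (-1 : ℝ) * hid
  -- put everything together
  calc ∫ ω, ‖(K : ℝ)⁻¹ • ∑ u ∈ S ω, x u - xbar‖ ^ 2 ∂μ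
      = ∑ A ∈ P, ((U.choose K : ℝ))⁻¹ * f A := hPsum
    _ = ∑ A ∈ P, ((U.choose K : ℝ))⁻¹ * (((K : ℝ)⁻¹) ^ 2 * ‖∑ u ∈ A, y u‖ ^ 2) :=
        Finset.sum_congr rfl fun A hA => by rw [hfA A hA]
    _ = ((U.choose K : ℝ))⁻¹ * ((K : ℝ)⁻¹) ^ 2
          * (((U - 2).choose (K - 1) : ℝ) * ∑ u, ‖y u‖ ^ 2) := by
        rw [← Finset.mul_sum, ← Finset.mul_sum,
          sum_sq_norm_powersetCard y hsumy K hK1]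
        ring
    _ ≤ ((U.choose K : ℝ))⁻¹ * ((K : ℝ)⁻¹) ^ 2
          * (((U - 2).choose (K - 1) : ℝ) * ((U : ℝ) * (4 * η ^ 2 * G ^ 2))) := by
        refine mul_le_mul_of_nonneg_left (mul_le_mul_of_nonneg_left hT hM0) (by positivity)
    _ = ((U : ℝ) / (K * ((U : ℝ) - 1))) * (1 - (K : ℝ) / (U : ℝ)) * (4 * η ^ 2 * G ^ 2) := by
        rw [← hcoef]; ring
end

section
/- Let U ≥ 1 and L ≥ 1, let d^1, …, d^U be independent random variables uniformly distributed on {1, …, L+1}, fix l ∈ {1, …, L}, and set S_l = {u : d^u ≤ l} and p_l = (1 − l/(L+1))^U. Let w, w_1, …, w_U be fixed vectors in a real inner product space with w̄ = (1/U) Σ_{u=1}^U w_u, and define the SALF layer estimator w̃ = w if S_l = ∅, and w̃ = (1/(1 − p_l)) ((1/|S_l|) Σ_{u∈S_l} w_u − p_l w) if S_l ≠ ∅. Then for every K ∈ {1, …, U}, E[w̃ | |S_l| = K] = (1/(1 − p_l)) (w̄ − p_l w). -/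
open MeasureTheory ProbabilityTheory Finset
open scoped ENNReal ProbabilityTheory

lemma salf_count {n K : ℕ} (hK : 1 ≤ K) (u : Fin n) :
    (((Finset.univ : Finset (Fin n)).powersetCard K).filter (fun T => u ∈ T)).card
      = (n - 1).choose (K - 1) := by
  have h2 : ((((Finset.univ : Finset (Fin n)).erase u)).powersetCard (K-1)).card
      = (n - 1).choose (K - 1) := by
    rw [Finset.card_powersetCard, Finset.card_erase_of_mem (Finset.mem_univ u),
      Finset.card_univ, Fintype.card_fin]
  rw [← h2]
  refine Finset.card_nbij' (fun T => T.erase u) (fun T => insert u T) ?_ ?_ ?_ ?_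
  · intro T hT
    simp only [Finset.mem_coe, Finset.mem_filter, Finset.mem_powersetCard] at hT ⊢
    refine ⟨fun x hx => ?_, ?_⟩
    · simp only [Finset.mem_erase] at hx ⊢
      exact ⟨hx.1, Finset.mem_univ _⟩
    · rw [Finset.card_erase_of_mem hT.2, hT.1.2]
  · intro T hT
    simp only [Finset.mem_coe, Finset.mem_powersetCard] at hT
    simp only [Finset.mem_coe, Finset.mem_filter, Finset.mem_powersetCard]
    have hu : u ∉ T := fun h => (Finset.mem_erase.mp (hT.1 h)).1 rfl
    refine ⟨⟨Finset.subset_univ _, ?_⟩, Finset.mem_insert_self _ _⟩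
    rw [Finset.card_insert_of_notMem hu, hT.2]
    omega
  · intro T hT
    simp only [Finset.mem_coe, Finset.mem_filter] at hT
    exact Finset.insert_erase hT.2
  · intro T hT
    simp only [Finset.mem_coe, Finset.mem_powersetCard] at hT
    have hu : u ∉ T := fun h => (Finset.mem_erase.mp (hT.1 h)).1 rfl
    exact Finset.erase_insert hu

/-- **Conditional mean of the SALF layer estimator given the number of participants.**
Let `U ≥ 1`, `L ≥ 1`, and let `d 1, …, d U` be independent random variables, uniform on
`{1, …, L+1}`.  Fix a layer `l ∈ {1, …, L}`, set `S_l = {u : d u ≤ l}` and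
`p_l = (1 − l/(L+1))^U`.  Given fixed vectors `w, w 1, …, w U` in a real inner product
space with `w̄ = (1/U) ∑ u, w u`, define the SALF layer estimator
`w̃ = w` if `S_l = ∅` and `w̃ = (1/(1 − p_l))((1/|S_l|) ∑_{u∈S_l} w u − p_l w)` otherwise.
Then for every `K ∈ {1, …, U}`, `E[w̃ | |S_l| = K] = (1/(1 − p_l))(w̄ − p_l w)`. -/
theorem salf_layer_estimator_cond_mean
    {Ω : Type*} [MeasurableSpace Ω] (μ : Measure Ω) [IsProbabilityMeasure μ]
    {H : Type*} [NormedAddCommGroup H] [InnerProductSpace ℝ H] [CompleteSpace H]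
    (U L : ℕ) (hU : 1 ≤ U) (hL : 1 ≤ L)
    (d : Fin U → Ω → ℕ)
    (hd_meas : ∀ u, Measurable (d u))
    (hd_indep : iIndepFun d μ)
    (hd_unif : ∀ u, ∀ k ∈ Finset.Icc 1 (L + 1),
      μ {ω | d u ω = k} = ((L : ℝ≥0∞) + 1)⁻¹)
    (l : ℕ) (hl : l ∈ Finset.Icc 1 L)
    (Sl : Ω → Finset (Fin U))
    (hSl : ∀ ω, Sl ω = Finset.univ.filter fun u => d u ω ≤ l)
    (p : ℝ) (hp : p = (1 - (l : ℝ) / ((L : ℝ) + 1)) ^ U)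
    (w : H) (wloc : Fin U → H)
    (wbar : H) (hwbar : wbar = (U : ℝ)⁻¹ • ∑ u, wloc u)
    (wt : Ω → H)
    (hwt : ∀ ω, wt ω = if Sl ω = ∅ then w
      else (1 - p)⁻¹ • (((Sl ω).card : ℝ)⁻¹ • (∑ u ∈ Sl ω, wloc u) - p • w))
    (K : ℕ) (hK : K ∈ Finset.Icc 1 U) :
    ∫ ω, wt ω ∂(μ[|{ω | (Sl ω).card = K}]) = (1 - p)⁻¹ • (wbar - p • w) := by
  obtain ⟨hl1, hl2⟩ := Finset.mem_Icc.mp hl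
  obtain ⟨hK1, hK2⟩ := Finset.mem_Icc.mp hK
  -- basic ENNReal quantities
  set ν : ℝ≥0∞ := ((L : ℝ≥0∞) + 1)⁻¹ with hν
  have hLne : ((L : ℝ≥0∞) + 1) ≠ 0 := by simp
  have hLnt : ((L : ℝ≥0∞) + 1) ≠ ⊤ := by
    simp [ENNReal.add_ne_top]
  have hν_ne_top : ν ≠ ⊤ := by
    simp [hν, ENNReal.inv_ne_top, hLne]
  have hν_ne_zero : ν ≠ 0 := by
    simp [hν, hLnt]
  -- each d u is a.s. in Icc 1 (L+1)
  have hnull : ∀ (u : Fin U) (k : ℕ), k ∉ Finset.Icc 1 (L + 1) → μ {ω | d u ω = k} = 0 := by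
    intro u k hk
    have hdisj : ((Finset.Icc 1 (L+1) : Finset ℕ) : Set ℕ).PairwiseDisjoint
        (fun j => {ω | d u ω = j}) := by
      intro i _ j _ hij
      simp only [Function.onFun, Set.disjoint_left]
      rintro ω hi hj
      exact hij (hi.symm.trans hj)
    have hmeas' : ∀ j ∈ Finset.Icc 1 (L+1), MeasurableSet {ω | d u ω = j} :=
      fun j _ => (hd_meas u) (measurableSet_singleton j)
    have hsum : μ (⋃ j ∈ Finset.Icc 1 (L+1), {ω | d u ω = j}) = 1 := by
      rw [measure_biUnion_finset hdisj hmeas']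
      rw [Finset.sum_congr rfl (fun j hj => hd_unif u j hj)]
      rw [Finset.sum_const, Nat.card_Icc]
      simp only [Nat.add_sub_cancel, nsmul_eq_mul]
      push_cast
      exact ENNReal.mul_inv_cancel hLne hLnt
    have hcompl : μ (⋃ j ∈ Finset.Icc 1 (L+1), {ω | d u ω = j})ᶜ = 0 := by
      have hm : MeasurableSet (⋃ j ∈ Finset.Icc 1 (L+1), {ω | d u ω = j}) :=
        (Finset.Icc 1 (L+1)).measurableSet_biUnion hmeas'
      rw [measure_compl hm (measure_ne_top μ _), hsum, measure_univ, tsub_self]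
    refine measure_mono_null ?_ hcompl
    intro ω hω
    simp only [Set.mem_setOf_eq] at hω
    simp only [Set.mem_compl_iff, Set.mem_iUnion, not_exists]
    intro j hj hdj
    exact hk (show k ∈ _ by rw [← hω, hdj]; exact hj)
  -- measure of {d u ≤ l} and {l < d u}
  have hle : ∀ u : Fin U, μ {ω | d u ω ≤ l} = (l : ℝ≥0∞) * ν := by
    intro u
    have hset : {ω | d u ω ≤ l} = ⋃ j ∈ insert 0 (Finset.Icc 1 l), {ω | d u ω = j} := by
      ext ω
      simp only [Set.mem_setOf_eq, Set.mem_iUnion, Finset.mem_insert, Finset.mem_Icc]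
      constructor
      · intro h; exact ⟨d u ω, by omega, rfl⟩
      · rintro ⟨j, hj, rfl⟩; omega
    have hdisj : (((insert 0 (Finset.Icc 1 l) : Finset ℕ)) : Set ℕ).PairwiseDisjoint
        (fun j => {ω | d u ω = j}) := by
      intro i _ j _ hij
      simp only [Function.onFun, Set.disjoint_left]
      rintro ω hi hj
      exact hij (hi.symm.trans hj)
    rw [hset, measure_biUnion_finset hdisj
      (fun j _ => (hd_meas u) (measurableSet_singleton j))]
    rw [Finset.sum_insert (by simp)]
    rw [hnull u 0 (by simp)]
    rw [Finset.sum_congr rfl (fun j hj => hd_unif u j (by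
      simp only [Finset.mem_Icc] at hj ⊢; omega))]
    rw [Finset.sum_const, Nat.card_Icc]
    simp [nsmul_eq_mul]
  have hgt : ∀ u : Fin U, μ {ω | l < d u ω} = ((L + 1 - l : ℕ) : ℝ≥0∞) * ν := by
    intro u
    have hset : {ω | l < d u ω} = {ω | d u ω ≤ l}ᶜ := by
      ext ω; simp [Set.mem_compl_iff, not_le]
    rw [hset, measure_compl (show MeasurableSet {ω | d u ω ≤ l} from (hd_meas u) measurableSet_Iic) (measure_ne_top μ _),
      measure_univ, hle u]
    have hcast : ((L + 1 - l : ℕ) : ℝ≥0∞) = ((L : ℝ≥0∞) + 1) - (l : ℝ≥0∞) := by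
      rw [ENNReal.natCast_sub]
      push_cast; ring_nf
    rw [hcast, ENNReal.sub_mul (fun _ _ => hν_ne_top), hν,
      ENNReal.mul_inv_cancel hLne hLnt]
  -- events
  set a : ℝ≥0∞ := (l : ℝ≥0∞) * ν with ha
  set b : ℝ≥0∞ := ((L + 1 - l : ℕ) : ℝ≥0∞) * ν with hb
  have hCset : ∀ (T : Finset (Fin U)),
      {ω | Sl ω = T} = ⋂ u, d u ⁻¹' (if u ∈ T then Set.Iic l else Set.Ioi l) := by
    intro T
    ext ω
    simp only [Set.mem_setOf_eq, Set.mem_iInter, Set.mem_preimage, hSl]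
    rw [Finset.ext_iff]
    constructor
    · intro h u
      have := h u
      simp only [Finset.mem_filter, Finset.mem_univ, true_and] at this
      split_ifs with hu
      · exact Set.mem_Iic.mpr (this.mpr hu)
      · exact Set.mem_Ioi.mpr (by by_contra hc; exact hu (this.mp (by omega)))
    · intro h u
      have := h u
      simp only [Finset.mem_filter, Finset.mem_univ, true_and]
      split_ifs at this with hu
      · exact ⟨fun _ => hu, fun _ => this⟩
      · simp only [Set.mem_Ioi] at this
        exact ⟨fun hc => absurd hc (by omega), fun hc => absurd hc (fun h' => hu h')⟩
  have hCmeas : ∀ (T : Finset (Fin U)), MeasurableSet {ω | Sl ω = T} := by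
    intro T
    rw [hCset T]
    exact MeasurableSet.iInter fun u => (hd_meas u) (by split_ifs <;> trivial)
  have hμC : ∀ (T : Finset (Fin U)), μ {ω | Sl ω = T} = a ^ T.card * b ^ (U - T.card) := by
    intro T
    rw [hCset T]
    rw [hd_indep.meas_iInter (fun u =>
      ⟨(if u ∈ T then Set.Iic l else Set.Ioi l), trivial, rfl⟩)]
    have hval : ∀ u : Fin U, μ (d u ⁻¹' (if u ∈ T then Set.Iic l else Set.Ioi l))
        = if u ∈ T then a else b := by
      intro u
      split_ifs with hu
      · rw [show d u ⁻¹' Set.Iic l = {ω | d u ω ≤ l} from rfl, hle u]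
      · rw [show d u ⁻¹' Set.Ioi l = {ω | l < d u ω} from rfl, hgt u]
    rw [Finset.prod_congr rfl (fun u _ => hval u), Finset.prod_ite, Finset.prod_const,
      Finset.prod_const, Finset.filter_mem_eq_inter, Finset.univ_inter]
    congr 1
    rw [show (Finset.univ.filter fun u => u ∉ T) = Tᶜ by ext x; simp [Finset.mem_compl],
      Finset.card_compl, Fintype.card_fin]
  -- the conditioning event
  set A : Set Ω := {ω | (Sl ω).card = K} with hAdef
  have hAun : A = ⋃ T ∈ (Finset.univ : Finset (Fin U)).powersetCard K, {ω | Sl ω = T} := by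
    ext ω
    simp only [hAdef, Set.mem_setOf_eq, Set.mem_iUnion, Finset.mem_powersetCard]
    constructor
    · intro h; exact ⟨Sl ω, ⟨Finset.subset_univ _, h⟩, rfl⟩
    · rintro ⟨T, ⟨_, hc⟩, rfl⟩; exact hc
  have hAmeas : MeasurableSet A := by
    rw [hAun]
    exact ((Finset.univ : Finset (Fin U)).powersetCard K).measurableSet_biUnion
      (fun T _ => hCmeas T)
  have hdisjC : ∀ (s : Finset (Finset (Fin U))), (s : Set (Finset (Fin U))).PairwiseDisjoint
      (fun T => {ω | Sl ω = T}) := by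
    intro s T _ T' _ hTT'
    simp only [Function.onFun, Set.disjoint_left, Set.mem_setOf_eq]
    rintro ω rfl h
    exact hTT' h
  have hμA : μ A = (U.choose K : ℝ≥0∞) * (a ^ K * b ^ (U - K)) := by
    rw [hAun, measure_biUnion_finset (hdisjC _) (fun T _ => hCmeas T)]
    rw [Finset.sum_congr rfl (fun T hT => by
      rw [hμC T, (Finset.mem_powersetCard.mp hT).2])]
    rw [Finset.sum_const, Finset.card_powersetCard, Finset.card_univ, Fintype.card_fin,
      nsmul_eq_mul]
  have hμAu : ∀ u : Fin U, μ (A ∩ {ω | d u ω ≤ l})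
      = ((U - 1).choose (K - 1) : ℝ≥0∞) * (a ^ K * b ^ (U - K)) := by
    intro u
    have hset : A ∩ {ω | d u ω ≤ l}
        = ⋃ T ∈ ((Finset.univ : Finset (Fin U)).powersetCard K).filter (fun T => u ∈ T),
          {ω | Sl ω = T} := by
      ext ω
      simp only [hAdef, Set.mem_inter_iff, Set.mem_setOf_eq, Set.mem_iUnion,
        Finset.mem_filter, Finset.mem_powersetCard]
      constructor
      · rintro ⟨hc, hd⟩
        refine ⟨Sl ω, ⟨⟨Finset.subset_univ _, hc⟩, ?_⟩, rfl⟩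
        rw [hSl]; simp [hd]
      · rintro ⟨T, ⟨⟨_, hc⟩, hu⟩, rfl⟩
        refine ⟨hc, ?_⟩
        rw [hSl] at hu
        simpa using (Finset.mem_filter.mp hu).2
    rw [hset, measure_biUnion_finset (hdisjC _) (fun T _ => hCmeas T)]
    rw [Finset.sum_congr rfl (fun T hT => by
      rw [hμC T, (Finset.mem_powersetCard.mp (Finset.mem_filter.mp hT).1).2])]
    rw [Finset.sum_const, salf_count hK1 u, nsmul_eq_mul]
  -- nonvanishing facts
  have hane : a ≠ 0 := mul_ne_zero (Nat.cast_ne_zero.mpr (by omega)) hν_ne_zero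
  have hbne : b ≠ 0 := mul_ne_zero (Nat.cast_ne_zero.mpr (by omega)) hν_ne_zero
  have haT : a ≠ ⊤ := ENNReal.mul_ne_top (ENNReal.natCast_ne_top _) hν_ne_top
  have hbT : b ≠ ⊤ := ENNReal.mul_ne_top (ENNReal.natCast_ne_top _) hν_ne_top
  set r : ℝ := (a ^ K * b ^ (U - K)).toReal with hrdef
  have hc0 : a ^ K * b ^ (U - K) ≠ 0 := mul_ne_zero (pow_ne_zero _ hane) (pow_ne_zero _ hbne)
  have hcT : a ^ K * b ^ (U - K) ≠ ⊤ :=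
    ENNReal.mul_ne_top (ENNReal.pow_ne_top haT) (ENNReal.pow_ne_top hbT)
  have hr0 : r ≠ 0 := ENNReal.toReal_ne_zero.mpr ⟨hc0, hcT⟩
  have hm : (μ A).toReal = (U.choose K : ℝ) * r := by
    rw [hμA, ENNReal.toReal_mul, ENNReal.toReal_natCast]
  have hm0 : (μ A).toReal ≠ 0 := by
    rw [hm]
    exact mul_ne_zero (Nat.cast_ne_zero.mpr (Nat.choose_pos hK2).ne') hr0
  have hchoose : U * (U - 1).choose (K - 1) = U.choose K * K := by
    have h := Nat.add_one_mul_choose_eq (U - 1) (K - 1)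
    have h1 : U - 1 + 1 = U := by omega
    have h2 : K - 1 + 1 = K := by omega
    rwa [h1, h2] at h
  have hchooseR : (U : ℝ) * ((U - 1).choose (K - 1) : ℝ) = (U.choose K : ℝ) * K := by
    exact_mod_cast hchoose
  -- integrability
  have hintind : ∀ u : Fin U, Integrable
      (fun ω => ({ω' | d u ω' ≤ l}).indicator (fun _ => wloc u) ω) (μ.restrict A) := by
    intro u
    refine (integrable_indicator_iff
      (show MeasurableSet {ω' | d u ω' ≤ l} from (hd_meas u) measurableSet_Iic)).2 ?_
    exact integrableOn_const (measure_ne_top _ _)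
  have hFint : Integrable
      (fun ω => ∑ u, ({ω' | d u ω' ≤ l}).indicator (fun _ => wloc u) ω) (μ.restrict A) :=
    integrable_finset_sum _ (fun u _ => hintind u)
  -- a.e. identification of wt on A
  have hwt' : Set.EqOn wt (fun ω => (1 - p)⁻¹ • ((K : ℝ)⁻¹ •
      (∑ u, ({ω' | d u ω' ≤ l}).indicator (fun _ => wloc u) ω) - p • w)) A := by
    intro ω hω
    have hcard : (Sl ω).card = K := hω
    have hne : Sl ω ≠ ∅ := by
      intro h; rw [h] at hcard; simp at hcard; omega
    rw [hwt ω, if_neg hne, hcard]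
    have hsum : (∑ u ∈ Sl ω, wloc u)
        = ∑ u, ({ω' | d u ω' ≤ l}).indicator (fun _ => wloc u) ω := by
      rw [hSl, Finset.sum_filter]
      refine Finset.sum_congr rfl (fun u _ => ?_)
      simp [Set.indicator_apply]
    rw [hsum]
  -- main integral computation
  rw [ProbabilityTheory.cond, integral_smul_measure, setIntegral_congr_fun hAmeas hwt']
  have key : (∫ ω in A, ((1 - p)⁻¹ • ((K : ℝ)⁻¹ •
      (∑ u, ({ω' | d u ω' ≤ l}).indicator (fun _ => wloc u) ω) - p • w)) ∂μ)
      = (1 - p)⁻¹ • ((K : ℝ)⁻¹ •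
        ((((U - 1).choose (K - 1) : ℝ) * r) • ∑ u, wloc u) - (μ A).toReal • (p • w)) := by
    rw [integral_smul]
    congr 1
    have hsm : Integrable (fun ω => (K : ℝ)⁻¹ •
        (∑ u, ({ω' | d u ω' ≤ l}).indicator (fun _ => wloc u) ω)) (μ.restrict A) :=
      hFint.smul ((K : ℝ)⁻¹)
    rw [integral_sub hsm (integrable_const _)]
    congr 1
    · rw [integral_smul]
      congr 1
      rw [integral_finset_sum _ (fun u _ => hintind u)]
      rw [Finset.smul_sum]
      refine Finset.sum_congr rfl (fun u _ => ?_)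
      rw [integral_indicator_const _
        (show MeasurableSet {ω' | d u ω' ≤ l} from (hd_meas u) measurableSet_Iic),
        measureReal_def, Measure.restrict_apply
          (show MeasurableSet {ω' | d u ω' ≤ l} from (hd_meas u) measurableSet_Iic),
        Set.inter_comm, hμAu u, ENNReal.toReal_mul, ENNReal.toReal_natCast, mul_smul]
    · rw [integral_const, measureReal_def, Measure.restrict_apply_univ]
  rw [key, ENNReal.toReal_inv]
  rw [smul_comm ((μ A).toReal⁻¹) ((1 - p)⁻¹), smul_sub]
  congr 1
  congr 1
  · rw [smul_smul, smul_smul, hwbar]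
    congr 1
    rw [hm]
    have hKne : (K : ℝ) ≠ 0 := Nat.cast_ne_zero.mpr (by omega)
    have hCne : (U.choose K : ℝ) ≠ 0 := Nat.cast_ne_zero.mpr (Nat.choose_pos hK2).ne'
    have hUne : (U : ℝ) ≠ 0 := Nat.cast_ne_zero.mpr (by omega)
    field_simp
    linear_combination hchooseR
  · rw [smul_smul, inv_mul_cancel₀ hm0, one_smul]
end

section
/- (Unbiasedness of SALF) Let U ≥ 1 and L ≥ 1, let d^1, …, d^U be independent random variables uniformly distributed on {1, …, L+1}, fix l ∈ {1, …, L}, and set S_l = {u : d^u ≤ l} and p_l = (1 − l/(L+1))^U. Let w, w_1, …, w_U be fixed vectors in a real inner product space with w̄ = (1/U) Σ_{u=1}^U w_u, and define the SALF layer estimator w̃ = w if S_l = ∅, and w̃ = (1/(1 − p_l)) ((1/|S_l|) Σ_{u∈S_l} w_u − p_l w) if S_l ≠ ∅. Then E[w̃] = w̄; that is, the SALF layer estimator is an unbiased estimator of the FedAvg update. -/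
open MeasureTheory ProbabilityTheory Finset
open scoped ENNReal

section Aux

lemma salf_sum_P (U : ℕ) (q r : ℝ) :
    ∑ S : Finset (Fin U), q ^ S.card * r ^ (U - S.card) = (q + r) ^ U := by
  classical
  have h := Finset.prod_add (fun _ : Fin U => q) (fun _ => r) Finset.univ
  simp only [Finset.prod_const, Finset.card_univ, Fintype.card_fin,
    Finset.powerset_univ] at h
  rw [h]
  refine Finset.sum_congr rfl fun S _ => ?_
  congr 1
  rw [Finset.card_sdiff_of_subset (Finset.subset_univ S), Finset.card_univ, Fintype.card_fin]

lemma salf_c_eq (U : ℕ) (q r : ℝ) (u v : Fin U) :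
    ∑ S : Finset (Fin U), (if u ∈ S then q ^ S.card * r ^ (U - S.card) / S.card else 0)
    = ∑ S : Finset (Fin U), (if v ∈ S then q ^ S.card * r ^ (U - S.card) / S.card else 0) := by
  classical
  refine Fintype.sum_equiv (Equiv.swap u v).finsetCongr _ _ fun S => ?_
  have hmem : v ∈ (Equiv.swap u v).finsetCongr S ↔ u ∈ S := by
    simp [Equiv.finsetCongr_apply, Finset.mem_map_equiv]
  have hcard : ((Equiv.swap u v).finsetCongr S).card = S.card := by
    simp [Equiv.finsetCongr_apply]
  simp only [hcard, hmem]

lemma salf_c_val (U : ℕ) (q r : ℝ) (u : Fin U) :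
    (U : ℝ) * ∑ S : Finset (Fin U), (if u ∈ S then q ^ S.card * r ^ (U - S.card) / S.card else 0)
    = ∑ S : Finset (Fin U), (if S = ∅ then 0 else q ^ S.card * r ^ (U - S.card)) := by
  classical
  have h1 : ∀ v : Fin U,
      ∑ S : Finset (Fin U), (if v ∈ S then q ^ S.card * r ^ (U - S.card) / S.card else 0)
      = ∑ S : Finset (Fin U), (if u ∈ S then q ^ S.card * r ^ (U - S.card) / S.card else 0) :=
    fun v => salf_c_eq U q r v u
  have h2 : (U : ℝ) * ∑ S : Finset (Fin U),
        (if u ∈ S then q ^ S.card * r ^ (U - S.card) / S.card else 0)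
      = ∑ v : Fin U, ∑ S : Finset (Fin U),
        (if v ∈ S then q ^ S.card * r ^ (U - S.card) / S.card else 0) := by
    rw [Finset.sum_congr rfl fun v _ => h1 v, Finset.sum_const, Finset.card_univ,
      Fintype.card_fin, nsmul_eq_mul]
  rw [h2, Finset.sum_comm]
  refine Finset.sum_congr rfl fun S _ => ?_
  have : ∀ c : ℝ, ∑ v : Fin U, (if v ∈ S then c else 0) = (S.card : ℝ) * c := by
    intro c
    rw [Finset.sum_ite_mem, Finset.univ_inter, Finset.sum_const, nsmul_eq_mul]
  rw [this]
  by_cases hS : S = ∅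
  · simp [hS]
  · have hc : (S.card : ℝ) ≠ 0 := by
      simpa [Finset.card_eq_zero] using hS
    rw [if_neg hS]
    field_simp

lemma salf_alg {H : Type*} [AddCommGroup H] [Module ℝ H]
    (U : ℕ) (hU : 1 ≤ U) (q : ℝ) (hq0 : 0 < q) (hq1 : q < 1)
    (w : H) (wloc : Fin U → H) :
    ∑ S : Finset (Fin U), (q ^ S.card * (1 - q) ^ (U - S.card)) •
      (if S = (∅ : Finset (Fin U)) then w
       else (1 - (1 - q) ^ U)⁻¹ • (((S.card : ℝ))⁻¹ • (∑ u ∈ S, wloc u) - (1 - q) ^ U • w))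
    = (U : ℝ)⁻¹ • ∑ u, wloc u := by
  classical
  set r : ℝ := 1 - q with hr
  set p : ℝ := r ^ U with hpdef
  set P : Finset (Fin U) → ℝ := fun S => q ^ S.card * r ^ (U - S.card) with hP
  have hr0 : 0 ≤ r := by simp only [hr]; linarith
  have hr1 : r < 1 := by simp only [hr]; linarith
  have hp1 : p < 1 := pow_lt_one₀ hr0 hr1 (by omega)
  have hp' : (1 : ℝ) - p ≠ 0 := by linarith
  have hU0 : (U : ℝ) ≠ 0 := by positivity
  have hsum1 : ∑ S : Finset (Fin U), P S = 1 := by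
    rw [hP, salf_sum_P]; simp [hr]
  have hPempty : P ∅ = p := by simp [hP, hpdef]
  have hsumne : ∑ S : Finset (Fin U), (if S = ∅ then 0 else P S) = 1 - p := by
    have h1 : ∑ S : Finset (Fin U), (if S = ∅ then 0 else P S)
        = ∑ S : Finset (Fin U), (P S - if S = ∅ then P S else 0) := by
      refine Finset.sum_congr rfl fun S _ => ?_
      by_cases hS : S = ∅ <;> simp [hS]
    rw [h1, Finset.sum_sub_distrib, hsum1, Finset.sum_ite_eq' Finset.univ ∅ P]
    simp [hPempty]
  have hterm : ∀ S : Finset (Fin U),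
      (P S) • (if S = (∅ : Finset (Fin U)) then w
        else (1 - p)⁻¹ • (((S.card : ℝ))⁻¹ • (∑ u ∈ S, wloc u) - p • w))
      = (if S = ∅ then P S else -(P S * ((1 - p)⁻¹ * p))) • w
        + ((1 - p)⁻¹ * P S * ((S.card : ℝ))⁻¹) • ∑ u ∈ S, wloc u := by
    intro S
    by_cases hS : S = ∅
    · simp [hS]
    · rw [if_neg hS, if_neg hS]
      module
  rw [Finset.sum_congr rfl fun S _ => hterm S, Finset.sum_add_distrib]
  have hcoef : ∑ S : Finset (Fin U),
      (if S = ∅ then P S else -(P S * ((1 - p)⁻¹ * p))) = 0 := by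
    have heq : ∀ S : Finset (Fin U), (if S = ∅ then P S else -(P S * ((1 - p)⁻¹ * p)))
        = (if S = ∅ then P S + P S * ((1 - p)⁻¹ * p) else 0) - P S * ((1 - p)⁻¹ * p) := by
      intro S; by_cases hS : S = ∅ <;> simp [hS]
    rw [Finset.sum_congr rfl fun S _ => heq S, Finset.sum_sub_distrib,
      Finset.sum_ite_eq' Finset.univ (∅ : Finset (Fin U)), ← Finset.sum_mul, hsum1]
    simp only [Finset.mem_univ, if_true, hPempty, one_mul]
    field_simp
    ring
  have hA : ∑ S : Finset (Fin U),
      (if S = ∅ then P S else -(P S * ((1 - p)⁻¹ * p))) • w = (0 : H) := by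
    rw [← Finset.sum_smul, hcoef, zero_smul]
  rw [hA, zero_add]
  -- the main double-sum swap
  have hswap : ∑ S : Finset (Fin U), ((1 - p)⁻¹ * P S * ((S.card : ℝ))⁻¹) • ∑ u ∈ S, wloc u
      = ∑ u : Fin U, ((1 - p)⁻¹ * ∑ S : Finset (Fin U),
          (if u ∈ S then P S / S.card else 0)) • wloc u := by
    have h1 : ∀ S : Finset (Fin U),
        ((1 - p)⁻¹ * P S * ((S.card : ℝ))⁻¹) • ∑ u ∈ S, wloc u
        = ∑ u : Fin U, (if u ∈ S then ((1 - p)⁻¹ * (P S / S.card)) • wloc u else 0) := by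
      intro S
      rw [Finset.sum_ite_mem, Finset.univ_inter, Finset.smul_sum]
      refine Finset.sum_congr rfl fun u _ => ?_
      congr 1
      ring
    rw [Finset.sum_congr rfl fun S _ => h1 S, Finset.sum_comm]
    refine Finset.sum_congr rfl fun u _ => ?_
    rw [Finset.mul_sum, Finset.sum_smul]
    refine Finset.sum_congr rfl fun S _ => ?_
    by_cases hS : u ∈ S <;> simp [hS]
  rw [hswap]
  have hcu : ∀ u : Fin U,
      ∑ S : Finset (Fin U), (if u ∈ S then P S / S.card else 0) = (1 - p) / U := by
    intro u
    have := salf_c_val U q r u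
    have hPs : ∀ S : Finset (Fin U), P S = q ^ S.card * r ^ (U - S.card) := fun S => rfl
    simp only [← hPs, div_eq_mul_inv] at this ⊢
    rw [hsumne] at this
    field_simp at this ⊢
    linarith [this]
  rw [Finset.sum_congr rfl fun u _ => by rw [hcu u]]
  have : (1 - p)⁻¹ * ((1 - p) / U) = (U : ℝ)⁻¹ := by field_simp
  rw [this, ← Finset.smul_sum]

private lemma salf_measure_Iic {Ω : Type*} [MeasurableSpace Ω] (μ : Measure Ω) [IsProbabilityMeasure μ]
    (U L : ℕ) (hL : 1 ≤ L)
    (d : Fin U → Ω → ℕ)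
    (hd_meas : ∀ u, Measurable (d u))
    (hd_unif : ∀ u, ∀ k ∈ Finset.Icc 1 (L + 1),
      μ {ω | d u ω = k} = ((L : ℝ≥0∞) + 1)⁻¹)
    (l : ℕ) (hl1 : 1 ≤ l) (hlL : l ≤ L) (u : Fin U) :
    μ (d u ⁻¹' Set.Iic l) = (l : ℝ≥0∞) * ((L : ℝ≥0∞) + 1)⁻¹ := by
  classical
  have hdisj : ∀ s : Finset ℕ, (↑s : Set ℕ).PairwiseDisjoint (fun k => {ω | d u ω = k}) := by
    intro s k _ k' _ hkk'
    simp only [Function.onFun, Set.disjoint_left, Set.mem_setOf_eq]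
    intro ω h1 h2; exact hkk' (h1 ▸ h2.symm ▸ rfl)
  have hmk : ∀ k : ℕ, MeasurableSet {ω | d u ω = k} := fun k => (hd_meas u) (MeasurableSet.of_discrete (s := {k}))
  have htot : μ (⋃ k ∈ Finset.Icc 1 (L+1), {ω | d u ω = k}) = 1 := by
    rw [measure_biUnion_finset (hdisj _) (fun k _ => hmk k)]
    rw [Finset.sum_congr rfl (hd_unif u), Finset.sum_const, Nat.card_Icc]
    simp only [Nat.add_sub_cancel, nsmul_eq_mul, Nat.cast_add, Nat.cast_one]
    rw [ENNReal.mul_inv_cancel (by simp) (by finiteness)]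
  have h0 : μ {ω | d u ω = 0} = 0 := by
    have hsub : {ω | d u ω = 0} ⊆ (⋃ k ∈ Finset.Icc 1 (L+1), {ω | d u ω = k})ᶜ := by
      intro ω hω
      simp only [Set.mem_compl_iff, Set.mem_iUnion, Set.mem_setOf_eq, not_exists]
      intro k hk h
      rw [Set.mem_setOf_eq] at hω
      rw [Finset.mem_Icc] at hk
      omega
    refine measure_mono_null hsub ?_
    rw [measure_compl (Finset.measurableSet_biUnion _ fun k _ => hmk k) (measure_ne_top μ _), htot,
      measure_univ, tsub_self]
  have hpre : d u ⁻¹' Set.Iic l = ⋃ k ∈ Finset.Iic l, {ω | d u ω = k} := by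
    ext ω
    simp only [Set.mem_preimage, Set.mem_Iic, Set.mem_iUnion, Set.mem_setOf_eq,
      Finset.mem_Iic, exists_prop]
    exact ⟨fun h => ⟨d u ω, h, rfl⟩, fun ⟨k, hk, h⟩ => h ▸ hk⟩
  rw [hpre, measure_biUnion_finset (hdisj _) (fun k _ => hmk k)]
  have hIic : Finset.Iic l = insert 0 (Finset.Icc 1 l) := by
    ext k; simp [Finset.mem_Iic, Finset.mem_Icc]; omega
  rw [hIic, Finset.sum_insert (by simp), h0, zero_add]
  rw [Finset.sum_congr rfl (fun k hk => hd_unif u k (by rw [Finset.mem_Icc] at hk ⊢; omega)),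
    Finset.sum_const, Nat.card_Icc]
  simp [nsmul_eq_mul]

end Aux

/-- **Lemma 2 (unbiasedness of the SALF layer estimator).**
Let `U ≥ 1`, `L ≥ 1`, and let `d 1, …, d U` be independent random variables, uniform on
`{1, …, L+1}`.  Fix a layer `l ∈ {1, …, L}`, set `S_l = {u : d u ≤ l}` and
`p_l = (1 − l/(L+1))^U`.  Given fixed vectors `w, w 1, …, w U` in a real inner product
space with `w̄ = (1/U) ∑ u, w u`, define the SALF layer estimator
`w̃ = w` if `S_l = ∅` and `w̃ = (1/(1 − p_l))((1/|S_l|) ∑_{u∈S_l} w u − p_l w)` otherwise.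
Then `E[w̃] = w̄`: the SALF layer estimator is unbiased for the FedAvg update. -/
theorem salf_layer_estimator_unbiased
    {Ω : Type*} [MeasurableSpace Ω] (μ : Measure Ω) [IsProbabilityMeasure μ]
    {H : Type*} [NormedAddCommGroup H] [InnerProductSpace ℝ H] [CompleteSpace H]
    (U L : ℕ) (hU : 1 ≤ U) (hL : 1 ≤ L)
    (d : Fin U → Ω → ℕ)
    (hd_meas : ∀ u, Measurable (d u))
    (hd_indep : iIndepFun d μ)
    (hd_unif : ∀ u, ∀ k ∈ Finset.Icc 1 (L + 1),
      μ {ω | d u ω = k} = ((L : ℝ≥0∞) + 1)⁻¹)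
    (l : ℕ) (hl : l ∈ Finset.Icc 1 L)
    (Sl : Ω → Finset (Fin U))
    (hSl : ∀ ω, Sl ω = Finset.univ.filter fun u => d u ω ≤ l)
    (p : ℝ) (hp : p = (1 - (l : ℝ) / ((L : ℝ) + 1)) ^ U)
    (w : H) (wloc : Fin U → H)
    (wbar : H) (hwbar : wbar = (U : ℝ)⁻¹ • ∑ u, wloc u)
    (wt : Ω → H)
    (hwt : ∀ ω, wt ω = if Sl ω = ∅ then w
      else (1 - p)⁻¹ • (((Sl ω).card : ℝ)⁻¹ • (∑ u ∈ Sl ω, wloc u) - p • w)) :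
    ∫ ω, wt ω ∂μ = wbar := by
  classical
  obtain ⟨hl1, hlL⟩ := Finset.mem_Icc.mp hl
  set q : ℝ := (l : ℝ) / ((L : ℝ) + 1) with hqdef
  have hq0 : 0 < q := by
    apply div_pos
    · exact_mod_cast Nat.lt_of_lt_of_le Nat.zero_lt_one hl1
    · positivity
  have hq1 : q < 1 := by
    rw [hqdef, div_lt_one (by positivity)]
    have : (l : ℝ) ≤ L := by exact_mod_cast hlL
    linarith
  set qe : ℝ≥0∞ := (l : ℝ≥0∞) * ((L : ℝ≥0∞) + 1)⁻¹ with hqedef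
  have hA : ∀ u, μ (d u ⁻¹' Set.Iic l) = qe :=
    fun u => salf_measure_Iic μ U L hL d hd_meas hd_unif l hl1 hlL u
  have hIicMeas : MeasurableSet (Set.Iic l) := MeasurableSet.of_discrete
  have hAc : ∀ u, μ (d u ⁻¹' (Set.Iic l)ᶜ) = 1 - qe := by
    intro u
    rw [Set.preimage_compl, prob_compl_eq_one_sub ((hd_meas u) hIicMeas), hA u]
  have hqe_le : qe ≤ 1 := by
    rw [← hA ⟨0, hU⟩]; exact prob_le_one
  have hqe_ne_top : qe ≠ ∞ := ne_top_of_le_ne_top ENNReal.one_ne_top hqe_le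
  have hqe_toReal : qe.toReal = q := by
    rw [hqedef, hqdef, ENNReal.toReal_mul, ENNReal.toReal_inv, div_eq_mul_inv,
      ENNReal.toReal_add (by finiteness) (by finiteness)]
    simp
  -- the event {Sl = S} and its measure
  have hES : ∀ S : Finset (Fin U), {ω | Sl ω = S}
      = ⋂ u, d u ⁻¹' (if u ∈ S then Set.Iic l else (Set.Iic l)ᶜ) := by
    intro S
    ext ω
    simp only [Set.mem_setOf_eq, Set.mem_iInter, hSl ω, Finset.ext_iff, Finset.mem_filter,
      Finset.mem_univ, true_and, Set.mem_preimage]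
    refine forall_congr' fun u => ?_
    by_cases hu : u ∈ S <;> simp [hu]
  have hEmeas : ∀ S : Finset (Fin U), MeasurableSet {ω | Sl ω = S} := by
    intro S
    rw [hES S]
    exact MeasurableSet.iInter fun u => (hd_meas u) MeasurableSet.of_discrete
  have hmeasE : ∀ S : Finset (Fin U),
      μ {ω | Sl ω = S} = qe ^ S.card * (1 - qe) ^ (U - S.card) := by
    intro S
    rw [hES S]
    have hindep := (iIndepFun_iff_measure_inter_preimage_eq_mul.mp hd_indep) Finset.univ
      (sets := fun u => if u ∈ S then Set.Iic l else (Set.Iic l)ᶜ)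
      (fun u _ => by by_cases hu : u ∈ S <;> simp [hu, MeasurableSet.of_discrete])
    have hset : (⋂ u, d u ⁻¹' (if u ∈ S then Set.Iic l else (Set.Iic l)ᶜ))
        = ⋂ u ∈ Finset.univ, d u ⁻¹' (if u ∈ S then Set.Iic l else (Set.Iic l)ᶜ) := by
      simp
    rw [hset, hindep]
    have hval : ∀ u : Fin U, μ (d u ⁻¹' (if u ∈ S then Set.Iic l else (Set.Iic l)ᶜ))
        = if u ∈ S then qe else 1 - qe := by
      intro u
      by_cases hu : u ∈ S
      · rw [if_pos hu, if_pos hu, hA u]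
      · rw [if_neg hu, if_neg hu, hAc u]
    rw [Finset.prod_congr rfl fun u _ => hval u, ← Finset.prod_sdiff (Finset.subset_univ S)]
    rw [Finset.prod_congr rfl (fun u hu => if_neg (Finset.mem_sdiff.mp hu).2),
      Finset.prod_congr rfl (fun u hu => if_pos hu), Finset.prod_const, Finset.prod_const,
      Finset.card_sdiff_of_subset (Finset.subset_univ S), Finset.card_univ, Fintype.card_fin, mul_comm]
  -- express wt as a finite sum of indicators
  set g : Finset (Fin U) → H := fun S => if S = ∅ then w
    else (1 - p)⁻¹ • (((S.card : ℝ))⁻¹ • (∑ u ∈ S, wloc u) - p • w) with hg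
  have hwt' : ∀ ω, wt ω = ∑ S : Finset (Fin U),
      Set.indicator {ω' | Sl ω' = S} (fun _ => g S) ω := by
    intro ω
    have h1 : ∀ S : Finset (Fin U), Set.indicator {ω' | Sl ω' = S} (fun _ => g S) ω
        = if Sl ω = S then g S else 0 := by
      intro S
      rw [Set.indicator_apply]
      simp [Set.mem_setOf_eq]
    rw [Finset.sum_congr rfl fun S _ => h1 S, Finset.sum_ite_eq Finset.univ (Sl ω) g,
      if_pos (Finset.mem_univ _), hwt ω]
  have hint : ∫ ω, wt ω ∂μ
      = ∑ S : Finset (Fin U), (μ {ω | Sl ω = S}).toReal • g S := by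
    rw [integral_congr_ae (Filter.Eventually.of_forall hwt'),
      integral_finset_sum _ (fun S _ => (integrable_const (g S)).indicator (hEmeas S))]
    exact Finset.sum_congr rfl fun S _ => integral_indicator_const (g S) (hEmeas S)
  have htoReal : ∀ S : Finset (Fin U),
      (μ {ω | Sl ω = S}).toReal = q ^ S.card * (1 - q) ^ (U - S.card) := by
    intro S
    rw [hmeasE S, ENNReal.toReal_mul, ENNReal.toReal_pow, ENNReal.toReal_pow, hqe_toReal,
      ENNReal.toReal_sub_of_le hqe_le (by finiteness), ENNReal.toReal_one, hqe_toReal]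
  rw [hint, Finset.sum_congr rfl fun S _ => by rw [htoReal S], hwbar]
  have hpq : p = (1 - q) ^ U := hp
  rw [hg]
  simp only [hpq]
  exact salf_alg U hU q hq0 hq1 w wloc
end

section
/- (Per-layer variance bound for SALF) Let U ≥ 2 and L ≥ 1, let d^1, …, d^U be independent random variables uniformly distributed on {1, …, L+1}, fix l ∈ {1, …, L}, and set S_l = {u : d^u ≤ l} and p_l = (1 − l/(L+1))^U. Let w, g_1, …, g_U be fixed vectors in a real inner product space with ‖g_u‖ ≤ G for all u, let η ≥ 0, set w_u = w − η g_u and w̄ = (1/U) Σ_{u=1}^U w_u, and define the SALF layer estimator w̃ = w if S_l = ∅, and w̃ = (1/(1 − p_l)) ((1/|S_l|) Σ_{u∈S_l} w_u − p_l w) if S_l ≠ ∅. Then E[‖w̃ − w̄‖²] ≤ η²G² (4U/(U − 1) + p_l)/(1 − p_l). -/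
open MeasureTheory ProbabilityTheory Finset
open scoped ENNReal

lemma salf_aux_tail_measure {Ω : Type*} [MeasurableSpace Ω] (μ : Measure Ω)
    [IsProbabilityMeasure μ]
    (L : ℕ) (d : Ω → ℕ) (hd : Measurable d)
    (hd_unif : ∀ k ∈ Finset.Icc 1 (L + 1), μ {ω | d ω = k} = ((L : ℝ≥0∞) + 1)⁻¹)
    (l : ℕ) (hl1 : 1 ≤ l) (hl2 : l ≤ L) :
    μ (d ⁻¹' Set.Ici (l+1)) = ((L + 1 - l : ℕ) : ℝ≥0∞) * ((L : ℝ≥0∞) + 1)⁻¹ := by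
  classical
  set E : ℕ → Set Ω := fun k => {ω | d ω = k} with hE
  have hEmeas : ∀ k, MeasurableSet (E k) := fun k => hd (by trivial : MeasurableSet {k})
  have hdisj : ∀ (s : Finset ℕ), (↑s : Set ℕ).PairwiseDisjoint E := by
    intro s k hk k' hk' hkk'
    simp only [Function.onFun, Set.disjoint_left]
    intro ω h1 h2
    exact hkk' (h1.symm.trans h2)
  have hsum : ∀ (s : Finset ℕ), (∀ k ∈ s, k ∈ Finset.Icc 1 (L+1)) →
      μ (⋃ k ∈ s, E k) = (s.card : ℝ≥0∞) * ((L : ℝ≥0∞) + 1)⁻¹ := by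
    intro s hs
    rw [measure_biUnion_finset (hdisj s) (fun k _ => hEmeas k)]
    rw [Finset.sum_congr rfl (fun k hk => hd_unif k (hs k hk))]
    simp [Finset.sum_const, mul_comm]
  have hT : μ (⋃ k ∈ Finset.Icc 1 (L+1), E k) = 1 := by
    rw [hsum _ (fun k hk => hk)]
    rw [Nat.card_Icc]
    have hne : ((L : ℝ≥0∞) + 1) ≠ 0 := by simp
    have : ((L + 1 + 1 - 1 : ℕ) : ℝ≥0∞) = (L : ℝ≥0∞) + 1 := by push_cast; ring
    rw [this, ENNReal.mul_inv_cancel hne (by finiteness)]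
  set T : Set Ω := ⋃ k ∈ Finset.Icc 1 (L+1), E k with hTdef
  have hTmeas : MeasurableSet T := by
    exact MeasurableSet.biUnion (Finset.Icc 1 (L+1)).countable_toSet (fun k _ => hEmeas k)
  have hTc : μ Tᶜ = 0 := by
    rw [measure_compl hTmeas (measure_ne_top μ T), hT, measure_univ, tsub_self]
  have hBT : d ⁻¹' Set.Ici (l+1) ∩ T = ⋃ k ∈ Finset.Icc (l+1) (L+1), E k := by
    ext ω
    simp only [Set.mem_inter_iff, Set.mem_preimage, Set.mem_Ici, hTdef, Set.mem_iUnion,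
      Finset.mem_Icc, hE, Set.mem_setOf_eq, exists_prop]
    constructor
    · rintro ⟨h1, k, ⟨hk1, hk2⟩, hk3⟩
      exact ⟨d ω, ⟨h1, by omega⟩, rfl⟩
    · rintro ⟨k, ⟨hk1, hk2⟩, hk3⟩
      exact ⟨by omega, k, ⟨by omega, hk2⟩, hk3⟩
  have key : μ (d ⁻¹' Set.Ici (l+1)) = μ (d ⁻¹' Set.Ici (l+1) ∩ T) := by
    refine le_antisymm ?_ (measure_mono Set.inter_subset_left)
    calc μ (d ⁻¹' Set.Ici (l+1)) ≤ μ (d ⁻¹' Set.Ici (l+1) ∩ T) + μ (d ⁻¹' Set.Ici (l+1) \ T) :=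
          measure_le_inter_add_diff μ _ _
      _ ≤ μ (d ⁻¹' Set.Ici (l+1) ∩ T) + μ Tᶜ := by
          gcongr; exact fun ω hω => hω.2
      _ = μ (d ⁻¹' Set.Ici (l+1) ∩ T) := by rw [hTc, add_zero]
  rw [key, hBT, hsum _ (fun k hk => by simp only [Finset.mem_Icc] at *; omega)]
  congr 2
  rw [Nat.card_Icc]
  omega

lemma salf_aux_arith (p η G V : ℝ) (hp0 : 0 ≤ p)
    (hq : (0:ℝ) < 1 - p) (hV : (4:ℝ) ≤ V) :
    p * (η*G)^2 + (1-p) * ((η * G * (1 + (1-p)⁻¹)) ^ 2)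
      ≤ η ^ 2 * G ^ 2 * (V + p) / (1 - p) := by
  have hqne : (1:ℝ) - p ≠ 0 := ne_of_gt hq
  rw [div_eq_mul_inv]
  have hqq : (1-p) * (1-p)⁻¹ = 1 := mul_inv_cancel₀ hqne
  have he : (0:ℝ) ≤ η^2 * G^2 := by positivity
  have expand : p * (η*G)^2 + (1-p) * (η * G * (1 + (1-p)⁻¹)) ^ 2
      = η^2*G^2 * (p + (1-p) + 2 + (1-p)⁻¹) := by
    field_simp
    ring
  rw [expand]
  have ht0 : (0:ℝ) < (1-p)⁻¹ := inv_pos.mpr hq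
  have ht1 : (1:ℝ) ≤ (1-p)⁻¹ := by nlinarith [hqq]
  have hgoal : (p + (1-p) + 2 + (1-p)⁻¹) ≤ (V + p) * (1-p)⁻¹ := by
    nlinarith [ht1, hV, hp0]
  calc η^2*G^2 * (p + (1-p) + 2 + (1-p)⁻¹) ≤ η^2*G^2 * ((V + p) * (1-p)⁻¹) :=
        mul_le_mul_of_nonneg_left hgoal he
    _ = η^2 * G^2 * (V + p) * (1-p)⁻¹ := by ring

/-- **Per-layer variance bound for the SALF estimator.**
Let `U ≥ 2`, `L ≥ 1`, and let `d 1, …, d U` be independent random variables, uniform on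
`{1, …, L+1}`.  Fix a layer `l ∈ {1, …, L}`, set `S_l = {u : d u ≤ l}` and
`p_l = (1 − l/(L+1))^U`.  Let `w, g 1, …, g U` be fixed vectors in a real inner product
space with `‖g u‖ ≤ G`, let `η ≥ 0`, set `w u = w − η g u` and `w̄ = (1/U) ∑ u, w u`, and
define the SALF layer estimator `w̃ = w` if `S_l = ∅` and
`w̃ = (1/(1 − p_l))((1/|S_l|) ∑_{u∈S_l} w u − p_l w)` otherwise.  Then
`E[‖w̃ − w̄‖²] ≤ η²G²(4U/(U − 1) + p_l)/(1 − p_l)`. -/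
theorem salf_layer_estimator_variance_le
    {Ω : Type*} [MeasurableSpace Ω] (μ : Measure Ω) [IsProbabilityMeasure μ]
    {H : Type*} [NormedAddCommGroup H] [InnerProductSpace ℝ H] [CompleteSpace H]
    (U L : ℕ) (hU : 2 ≤ U) (hL : 1 ≤ L)
    (d : Fin U → Ω → ℕ)
    (hd_meas : ∀ u, Measurable (d u))
    (hd_indep : iIndepFun d μ)
    (hd_unif : ∀ u, ∀ k ∈ Finset.Icc 1 (L + 1),
      μ {ω | d u ω = k} = ((L : ℝ≥0∞) + 1)⁻¹)
    (l : ℕ) (hl : l ∈ Finset.Icc 1 L)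
    (Sl : Ω → Finset (Fin U))
    (hSl : ∀ ω, Sl ω = Finset.univ.filter fun u => d u ω ≤ l)
    (p : ℝ) (hp : p = (1 - (l : ℝ) / ((L : ℝ) + 1)) ^ U)
    (w : H) (g : Fin U → H) (G : ℝ) (hg : ∀ u, ‖g u‖ ≤ G)
    (η : ℝ) (hη : 0 ≤ η)
    (wloc : Fin U → H) (hwloc : ∀ u, wloc u = w - η • g u)
    (wbar : H) (hwbar : wbar = (U : ℝ)⁻¹ • ∑ u, wloc u)
    (wt : Ω → H)
    (hwt : ∀ ω, wt ω = if Sl ω = ∅ then w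
      else (1 - p)⁻¹ • (((Sl ω).card : ℝ)⁻¹ • (∑ u ∈ Sl ω, wloc u) - p • w)) :
    ∫ ω, ‖wt ω - wbar‖ ^ 2 ∂μ
      ≤ η ^ 2 * G ^ 2 * (4 * (U : ℝ) / ((U : ℝ) - 1) + p) / (1 - p) := by
  classical
  obtain ⟨hl1, hl2⟩ := Finset.mem_Icc.mp hl
  -- basic scalar facts
  have hUpos : (0 : ℝ) < U := by
    have : (0:ℕ) < U := by omega
    exact_mod_cast this
  have hUne : (U : ℝ) ≠ 0 := ne_of_gt hUpos
  have hG : 0 ≤ G := le_trans (norm_nonneg _) (hg ⟨0, by omega⟩)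
  have hLpos : (0:ℝ) < (L:ℝ) + 1 := by positivity
  have hbase0 : (0:ℝ) ≤ 1 - (l:ℝ) / ((L:ℝ) + 1) := by
    rw [sub_nonneg, div_le_one hLpos]
    have : (l:ℝ) ≤ (L:ℝ) := by exact_mod_cast hl2
    linarith
  have hbase1 : 1 - (l:ℝ) / ((L:ℝ) + 1) < 1 := by
    have : (0:ℝ) < (l:ℝ) / ((L:ℝ)+1) := by
      apply div_pos _ hLpos
      exact_mod_cast hl1
    linarith
  have hp0 : 0 ≤ p := by rw [hp]; positivity
  have hp1 : p < 1 := by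
    rw [hp]
    exact pow_lt_one₀ hbase0 hbase1 (by omega)
  have hq : (0:ℝ) < 1 - p := by linarith
  have hqne : (1:ℝ) - p ≠ 0 := ne_of_gt hq
  -- the event that no user updates the layer
  set A : Set Ω := ⋂ u : Fin U, d u ⁻¹' Set.Ici (l+1) with hAdef
  have hAmeas : MeasurableSet A :=
    MeasurableSet.iInter fun u => hd_meas u (by trivial : MeasurableSet (Set.Ici (l+1)))
  have hAmem : ∀ ω, ω ∈ A ↔ Sl ω = ∅ := by
    intro ω
    simp only [hAdef, Set.mem_iInter, Set.mem_preimage, Set.mem_Ici, hSl,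
      Finset.eq_empty_iff_forall_notMem, Finset.mem_filter, Finset.mem_univ, true_and]
    constructor
    · intro h u hu; exact absurd hu (by have := h u; omega)
    · intro h u; have := h u; omega
  -- its measure
  have hmuA : μ A = (((L + 1 - l : ℕ) : ℝ≥0∞) * ((L : ℝ≥0∞) + 1)⁻¹) ^ U := by
    have hmi := hd_indep.meas_iInter (s := fun u => d u ⁻¹' Set.Ici (l+1))
      (fun u => ⟨Set.Ici (l+1), trivial, rfl⟩)
    rw [hAdef, hmi]
    rw [Finset.prod_congr rfl (fun u _ =>
      salf_aux_tail_measure μ L (d u) (hd_meas u) (hd_unif u) l hl1 hl2)]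
    simp [Finset.prod_const]
  have htoReal : ((((L + 1 - l : ℕ) : ℝ≥0∞) * ((L : ℝ≥0∞) + 1)⁻¹)).toReal
      = 1 - (l:ℝ)/((L:ℝ)+1) := by
    have h1 : ((L : ℝ≥0∞) + 1) = ((L+1 : ℕ) : ℝ≥0∞) := by push_cast; ring
    rw [ENNReal.toReal_mul, h1, ENNReal.toReal_inv, ENNReal.toReal_natCast,
      ENNReal.toReal_natCast]
    have hcast : ((L + 1 - l : ℕ) : ℝ) = (L:ℝ) + 1 - (l:ℝ) := by
      have h2 : l ≤ L + 1 := by omega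
      push_cast [h2]; ring
    rw [hcast]
    push_cast
    field_simp
  have hmuA_toReal : (μ A).toReal = p := by
    rw [hmuA, ENNReal.toReal_pow, htoReal, hp]
  have hmuAc_toReal : (μ Aᶜ).toReal = 1 - p := by
    rw [measure_compl hAmeas (measure_ne_top μ A), measure_univ,
      ENNReal.toReal_sub_of_le prob_le_one (by finiteness), ENNReal.toReal_one, hmuA_toReal]
  -- vector computations
  have hgsum : ∀ s : Finset (Fin U), ‖∑ u ∈ s, g u‖ ≤ (s.card : ℝ) * G := by
    intro s
    calc ‖∑ u ∈ s, g u‖ ≤ ∑ u ∈ s, ‖g u‖ := norm_sum_le _ _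
      _ ≤ s.card • G := Finset.sum_le_card_nsmul s _ G (fun u _ => hg u)
      _ = (s.card : ℝ) * G := by rw [nsmul_eq_mul]
  have hsumloc : ∀ s : Finset (Fin U), ∑ u ∈ s, wloc u
      = (s.card : ℝ) • w - η • ∑ u ∈ s, g u := by
    intro s
    rw [Finset.sum_congr rfl (fun u _ => hwloc u), Finset.sum_sub_distrib,
      Finset.sum_const, ← Finset.smul_sum]
    congr 1
    rw [← Nat.cast_smul_eq_nsmul (R := ℝ)]
  have hwbar' : wbar = w - ((U:ℝ)⁻¹ * η) • ∑ u, g u := by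
    rw [hwbar, hsumloc, Finset.card_univ, Fintype.card_fin]
    match_scalars <;> field_simp
  have hnorm_univ : ((U:ℝ)⁻¹ * η) * ‖∑ u, g u‖ ≤ η * G := by
    calc ((U:ℝ)⁻¹ * η) * ‖∑ u, g u‖ ≤ ((U:ℝ)⁻¹ * η) * ((Finset.univ.card : ℝ) * G) :=
          mul_le_mul_of_nonneg_left (hgsum _) (by positivity)
      _ = η * G := by
          rw [Finset.card_univ, Fintype.card_fin]
          field_simp
  have hnorm_bar : ‖w - wbar‖ ≤ η * G := by
    rw [hwbar', sub_sub_cancel, norm_smul, Real.norm_eq_abs,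
      abs_of_nonneg (by positivity : (0:ℝ) ≤ (U:ℝ)⁻¹ * η)]
    exact hnorm_univ
  -- pointwise bounds
  set C2 : ℝ := (η * G * (1 + (1-p)⁻¹)) ^ 2 with hC2
  have hboundA : ∀ ω, Sl ω = ∅ → ‖wt ω - wbar‖ ^ 2 ≤ (η*G) ^ 2 := by
    intro ω hω
    rw [hwt ω, if_pos hω]
    exact pow_le_pow_left₀ (norm_nonneg _) hnorm_bar 2
  have hboundB : ∀ ω, Sl ω ≠ ∅ → ‖wt ω - wbar‖ ^ 2 ≤ C2 := by
    intro ω hω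
    rw [hwt ω, if_neg hω]
    have hcpos : (0:ℝ) < ((Sl ω).card : ℝ) := by
      have : 0 < (Sl ω).card := Finset.card_pos.mpr (Finset.nonempty_of_ne_empty hω)
      exact_mod_cast this
    have hcne : (((Sl ω).card : ℝ)) ≠ 0 := ne_of_gt hcpos
    have hrw : (1 - p)⁻¹ • ((((Sl ω).card : ℝ))⁻¹ • (∑ u ∈ Sl ω, wloc u) - p • w) - wbar
        = ((U:ℝ)⁻¹ * η) • ∑ u, g u
          - ((1-p)⁻¹ * (((Sl ω).card:ℝ)⁻¹ * η)) • ∑ u ∈ Sl ω, g u := by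
      rw [hsumloc, hwbar']
      match_scalars <;> field_simp <;> ring
    rw [hrw]
    have hb : ‖((U:ℝ)⁻¹ * η) • ∑ u, g u
          - ((1-p)⁻¹ * (((Sl ω).card:ℝ)⁻¹ * η)) • ∑ u ∈ Sl ω, g u‖
        ≤ η * G * (1 + (1-p)⁻¹) := by
      calc _ ≤ ‖((U:ℝ)⁻¹ * η) • ∑ u, g u‖
            + ‖((1-p)⁻¹ * (((Sl ω).card:ℝ)⁻¹ * η)) • ∑ u ∈ Sl ω, g u‖ := norm_sub_le _ _
        _ ≤ η * G + (1-p)⁻¹ * (η * G) := by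
            apply add_le_add
            · rw [norm_smul, Real.norm_eq_abs,
                abs_of_nonneg (by positivity : (0:ℝ) ≤ (U:ℝ)⁻¹ * η)]
              exact hnorm_univ
            · rw [norm_smul, Real.norm_eq_abs, abs_of_nonneg (by positivity)]
              calc (1-p)⁻¹ * (((Sl ω).card:ℝ)⁻¹ * η) * ‖∑ u ∈ Sl ω, g u‖
                  ≤ (1-p)⁻¹ * (((Sl ω).card:ℝ)⁻¹ * η) * (((Sl ω).card:ℝ) * G) :=
                    mul_le_mul_of_nonneg_left (hgsum _) (by positivity)
                _ = (1-p)⁻¹ * (η * G) := by field_simp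
        _ = η * G * (1 + (1-p)⁻¹) := by ring
    calc ‖_‖ ^ 2 ≤ (η * G * (1 + (1-p)⁻¹)) ^ 2 := pow_le_pow_left₀ (norm_nonneg _) hb 2
      _ = C2 := rfl
  -- measurability and integrability
  letI : MeasurableSpace (Finset (Fin U)) := ⊤
  have hSl_meas : Measurable Sl := by
    apply measurable_to_countable'
    intro s
    have hpre : Sl ⁻¹' {s} = ⋂ u : Fin U, {ω | d u ω ≤ l ↔ u ∈ s} := by
      ext ω
      simp only [Set.mem_preimage, Set.mem_singleton_iff, hSl, Set.mem_iInter,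
        Set.mem_setOf_eq, Finset.ext_iff, Finset.mem_filter, Finset.mem_univ, true_and]
    rw [hpre]
    refine MeasurableSet.iInter fun u => ?_
    by_cases hu : u ∈ s
    · simp only [hu, iff_true]
      exact hd_meas u (by trivial : MeasurableSet (Set.Iic l))
    · simp only [hu, iff_false]
      exact (hd_meas u (by trivial : MeasurableSet (Set.Iic l))).compl
  have hwt_meas : Measurable fun ω => ‖wt ω - wbar‖ ^ 2 := by
    have : (fun ω => ‖wt ω - wbar‖ ^ 2)
        = (fun s : Finset (Fin U) => ‖(if s = ∅ then w
            else (1 - p)⁻¹ • (((s.card : ℝ))⁻¹ • (∑ u ∈ s, wloc u) - p • w)) - wbar‖ ^ 2)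
          ∘ Sl := by
      funext ω
      simp only [Function.comp_apply, hwt ω]
    rw [this]
    exact measurable_from_top.comp hSl_meas
  have hbdd : ∀ ω, ‖wt ω - wbar‖ ^ 2 ≤ max ((η*G)^2) C2 := by
    intro ω
    by_cases hω : Sl ω = ∅
    · exact le_trans (hboundA ω hω) (le_max_left _ _)
    · exact le_trans (hboundB ω hω) (le_max_right _ _)
  have hint : Integrable (fun ω => ‖wt ω - wbar‖ ^ 2) μ := by
    refine Integrable.mono' (integrable_const (max ((η*G)^2) C2))
      hwt_meas.aestronglyMeasurable (ae_of_all _ fun ω => ?_)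
    rw [Real.norm_eq_abs, abs_of_nonneg (by positivity)]
    exact hbdd ω
  -- split the integral
  have hsplit : ∫ ω, ‖wt ω - wbar‖ ^ 2 ∂μ
      = (∫ ω in A, ‖wt ω - wbar‖ ^ 2 ∂μ) + ∫ ω in Aᶜ, ‖wt ω - wbar‖ ^ 2 ∂μ :=
    (integral_add_compl hAmeas hint).symm
  have hIA : ∫ ω in A, ‖wt ω - wbar‖ ^ 2 ∂μ ≤ p * (η*G)^2 := by
    calc ∫ ω in A, ‖wt ω - wbar‖ ^ 2 ∂μ ≤ ∫ _ω in A, (η*G)^2 ∂μ := by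
          apply setIntegral_mono_on hint.integrableOn
            ((integrableOn_const_iff (C := (η*G)^2)).mpr (Or.inr (measure_lt_top μ A))) hAmeas
          intro ω hω
          exact hboundA ω ((hAmem ω).mp hω)
      _ = (μ A).toReal • ((η*G)^2) := setIntegral_const _
      _ = p * (η*G)^2 := by rw [hmuA_toReal, smul_eq_mul]
  have hIAc : ∫ ω in Aᶜ, ‖wt ω - wbar‖ ^ 2 ∂μ ≤ (1-p) * C2 := by
    calc ∫ ω in Aᶜ, ‖wt ω - wbar‖ ^ 2 ∂μ ≤ ∫ _ω in Aᶜ, C2 ∂μ := by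
          apply setIntegral_mono_on hint.integrableOn
            ((integrableOn_const_iff (C := C2)).mpr (Or.inr (measure_lt_top μ Aᶜ))) hAmeas.compl
          intro ω hω
          exact hboundB ω (fun he => hω ((hAmem ω).mpr he))
      _ = (μ Aᶜ).toReal • C2 := setIntegral_const _
      _ = (1-p) * C2 := by rw [hmuAc_toReal, smul_eq_mul]
  -- final arithmetic
  have hV : (4:ℝ) ≤ 4 * (U:ℝ) / ((U:ℝ) - 1) := by
    have hU1 : (1:ℝ) ≤ (U:ℝ) - 1 := by
      have : (2:ℝ) ≤ (U:ℝ) := by exact_mod_cast hU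
      linarith
    rw [le_div_iff₀ (by linarith)]
    linarith
  have harith : p * (η*G)^2 + (1-p) * C2
      ≤ η ^ 2 * G ^ 2 * (4 * (U : ℝ) / ((U : ℝ) - 1) + p) / (1 - p) := by
    rw [hC2]
    exact salf_aux_arith p η G _ hp0 hq hV
  calc ∫ ω, ‖wt ω - wbar‖ ^ 2 ∂μ
      = (∫ ω in A, ‖wt ω - wbar‖ ^ 2 ∂μ) + ∫ ω in Aᶜ, ‖wt ω - wbar‖ ^ 2 ∂μ := hsplit
    _ ≤ p * (η*G)^2 + (1-p) * C2 := add_le_add hIA hIAc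
    _ ≤ _ := harith
end

section
/- (Bounded variance of SALF, Lemma 3) Let U ≥ 2 and L ≥ 1, and let d^1, …, d^U be independent random variables uniformly distributed on {1, …, L+1}; for l ∈ {1, …, L} set S_l = {u : d^u ≤ l} and p_l = (1 − l/(L+1))^U. Let the model space be a product H = H_1 × ⋯ × H_L of real inner product spaces (one factor per layer). Let w ∈ H and g_1, …, g_U ∈ H be fixed with ‖g_u‖ ≤ G for all u, let η ≥ 0, set w_u = w − η g_u and w̄ = (1/U) Σ_{u=1}^U w_u. For each layer l, define the SALF layer estimator w̃^l = w^l if S_l = ∅, and w̃^l = (1/(1 − p_l)) ((1/|S_l|) Σ_{u∈S_l} w_u^l − p_l w^l) if S_l ≠ ∅, where v^l denotes the l-th component of v ∈ H, and let w̃ = (w̃^1, …, w̃^L). Then E[‖w̃ − w̄‖²] ≤ η² · (4 U L G²/(U − 1)) · (1 + (1 − 1/(L+1))^U)/(1 − (1 − 1/(L+1))^U). -/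
open MeasureTheory ProbabilityTheory Finset
open scoped ENNReal

lemma harm_bound : ∀ m : ℕ, 2 ≤ m → ∑ i ∈ Finset.range m, (1:ℝ)/(i+1) ≤ (2*m+5)/6 := by
  intro m hm
  induction m with
  | zero => omega
  | succ n ih =>
    rcases Nat.lt_or_ge n 2 with h | h
    · interval_cases n
      · omega
      · norm_num [Finset.sum_range_succ]
    · rw [Finset.sum_range_succ]
      have hn : (2:ℝ) ≤ n := by exact_mod_cast h
      have h1 : (1:ℝ)/(n+1) ≤ 1/3 := by
        apply div_le_div_of_nonneg_left <;> [norm_num; positivity; linarith]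
      have := ih h
      push_cast
      push_cast at this
      linarith

lemma key_sum (U L : ℕ) (hU : 2 ≤ U) (hL : 2 ≤ L) :
    ∑ i ∈ Finset.range (min U L), (1 - (1 - ((i:ℝ)+1)/((L:ℝ)+1))^U)⁻¹ ≤ 2*(L:ℝ) - 1 := by
  by_cases hsmall : U ≤ 4 ∧ L ≤ 3
  · obtain ⟨h1, h2⟩ := hsmall
    interval_cases U <;> interval_cases L <;>
      norm_num [Finset.sum_range_succ]
  · -- general case
    set m := min U L with hm
    have hm2 : 2 ≤ m := le_min hU hL
    have hmL : m ≤ L := min_le_right _ _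
    have hLpos : (0:ℝ) < (L:ℝ) + 1 := by positivity
    have hUpos : (0:ℝ) < (U:ℝ) := by positivity
    -- termwise bound
    have hterm : ∀ i ∈ Finset.range m,
        (1 - (1 - ((i:ℝ)+1)/((L:ℝ)+1))^U)⁻¹ ≤ 1 + ((L:ℝ)+1)/((U:ℝ)*((i:ℝ)+1)) := by
      intro i hi
      rw [Finset.mem_range] at hi
      set b : ℝ := ((i:ℝ)+1)/((L:ℝ)+1) with hb
      have hb0 : 0 < b := by positivity
      have hb1 : b ≤ 1 := by
        rw [hb, div_le_one hLpos]
        have : (i:ℝ) + 1 ≤ (L:ℝ) := by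
          have : i + 1 ≤ L := by omega
          exact_mod_cast this
        linarith
      have hUb : (0:ℝ) < (U:ℝ) * b := by positivity
      have hbern : 1 + (U:ℝ)*b ≤ (1+b)^U := by
        have := one_add_mul_le_pow (a := b) (by linarith) U
        linarith
      have hkey : (1 + (U:ℝ)*b) * (1-b)^U ≤ 1 := by
        have h1 : (1 + (U:ℝ)*b) * (1-b)^U ≤ (1+b)^U * (1-b)^U := by
          apply mul_le_mul_of_nonneg_right hbern (pow_nonneg (by linarith) U)
        have h2 : (1+b)^U * (1-b)^U = ((1+b)*(1-b))^U := (mul_pow _ _ _).symm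
        have h3 : ((1+b)*(1-b))^U ≤ 1 := by
          apply pow_le_one₀ (by nlinarith) (by nlinarith)
        linarith
      have hlow : ((U:ℝ)*b)/(1 + (U:ℝ)*b) ≤ 1 - (1-b)^U := by
        have : (1-b)^U ≤ 1/(1 + (U:ℝ)*b) := by
          rw [le_div_iff₀ (by linarith)]
          linarith [hkey]
        have h4 : 1 - 1/(1 + (U:ℝ)*b) = ((U:ℝ)*b)/(1 + (U:ℝ)*b) := by
          field_simp
          ring
        linarith
      have hlowpos : (0:ℝ) < ((U:ℝ)*b)/(1 + (U:ℝ)*b) := by positivity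
      have hinv : (1 - (1-b)^U)⁻¹ ≤ (((U:ℝ)*b)/(1 + (U:ℝ)*b))⁻¹ := by
        apply inv_anti₀ hlowpos hlow
      have heq : (((U:ℝ)*b)/(1 + (U:ℝ)*b))⁻¹ = 1 + 1/((U:ℝ)*b) := by
        field_simp
        ring
      have heq2 : 1 + 1/((U:ℝ)*b) = 1 + ((L:ℝ)+1)/((U:ℝ)*((i:ℝ)+1)) := by
        rw [hb]; field_simp
      calc (1 - (1-b)^U)⁻¹ ≤ (((U:ℝ)*b)/(1 + (U:ℝ)*b))⁻¹ := hinv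
        _ = 1 + ((L:ℝ)+1)/((U:ℝ)*((i:ℝ)+1)) := by rw [heq, heq2]
    have hsum : ∑ i ∈ Finset.range m, (1 - (1 - ((i:ℝ)+1)/((L:ℝ)+1))^U)⁻¹
        ≤ (m:ℝ) + ((L:ℝ)+1)/(U:ℝ) * ∑ i ∈ Finset.range m, (1:ℝ)/((i:ℝ)+1) := by
      calc ∑ i ∈ Finset.range m, (1 - (1 - ((i:ℝ)+1)/((L:ℝ)+1))^U)⁻¹
          ≤ ∑ i ∈ Finset.range m, (1 + ((L:ℝ)+1)/((U:ℝ)*((i:ℝ)+1))) :=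
            Finset.sum_le_sum hterm
        _ = (m:ℝ) + ((L:ℝ)+1)/(U:ℝ) * ∑ i ∈ Finset.range m, (1:ℝ)/((i:ℝ)+1) := by
            rw [Finset.sum_add_distrib, Finset.sum_const, Finset.card_range,
              Finset.mul_sum]
            congr 1
            · simp
            · apply Finset.sum_congr rfl
              intro i _
              field_simp
    have hharm := harm_bound m hm2
    have hfin : ((L:ℝ)+1)/(U:ℝ) * ((2*(m:ℝ)+5)/6) ≤ 2*(L:ℝ) - 1 - (m:ℝ) := by
      rw [div_mul_div_comm, div_le_iff₀ (by positivity)]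
      have hUL : (5 ≤ U) ∨ (4 ≤ L) := by omega
      have hm2' : (2:ℝ) ≤ (m:ℝ) := by exact_mod_cast hm2
      rcases le_or_gt L U with hcase | hcase
      · -- m = L
        have hmeq : m = L := by omega
        have hmr : (m:ℝ) = (L:ℝ) := by exact_mod_cast hmeq
        have hLU : (L:ℝ) ≤ (U:ℝ) := by exact_mod_cast hcase
        rcases hUL with h5 | h4
        · have h5' : (5:ℝ) ≤ (U:ℝ) := by exact_mod_cast h5
          nlinarith
        · have h4' : (4:ℝ) ≤ (L:ℝ) := by exact_mod_cast h4
          nlinarith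
      · -- m = U
        have hmeq : m = U := by omega
        have hmr : (m:ℝ) = (U:ℝ) := by exact_mod_cast hmeq
        have hLU : (U:ℝ) + 1 ≤ (L:ℝ) := by exact_mod_cast hcase
        nlinarith
    have hmono : ((L:ℝ)+1)/(U:ℝ) * ∑ i ∈ Finset.range m, (1:ℝ)/((i:ℝ)+1)
        ≤ ((L:ℝ)+1)/(U:ℝ) * ((2*(m:ℝ)+5)/6) := by
      apply mul_le_mul_of_nonneg_left hharm (by positivity)
    linarith

lemma rearrange_bound (L U : ℕ) (C T : ℕ → ℝ) (G : ℝ) (hG : 0 ≤ G)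
    (hC : ∀ i, i < L → 0 ≤ C i)
    (hanti : ∀ i j, i ≤ j → j < L → C j ≤ C i)
    (hT0 : ∀ i, 0 ≤ T i) (hTG : ∀ i, i < L → T i ≤ G)
    (hTsum : ∑ i ∈ Finset.range L, (T i)^2 ≤ (U:ℝ) * G^2) :
    ∑ i ∈ Finset.range L, (C i)^2 * (T i)^2
      ≤ G^2 * ∑ i ∈ Finset.range (min U L), (C i)^2 := by
  rcases le_or_gt L U with h | h
  · rw [min_eq_right h, Finset.mul_sum]
    apply Finset.sum_le_sum
    intro i hi
    rw [Finset.mem_range] at hi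
    have h1 : (T i)^2 ≤ G^2 := by
      have := hTG i hi; have := hT0 i; nlinarith
    have h2 : 0 ≤ (C i)^2 := sq_nonneg _
    nlinarith
  · rw [min_eq_left h.le]
    have hCU : 0 ≤ C U := hC U h
    have hsplit : ∑ i ∈ Finset.range L, (C i)^2 * (T i)^2
        = ∑ i ∈ Finset.range L, ((C i)^2 - (C U)^2) * (T i)^2
          + (C U)^2 * ∑ i ∈ Finset.range L, (T i)^2 := by
      rw [Finset.mul_sum, ← Finset.sum_add_distrib]
      apply Finset.sum_congr rfl
      intro i _; ring
    have hsub : Finset.range U ⊆ Finset.range L := Finset.range_subset_range.mpr h.le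
    have h1 : ∑ i ∈ Finset.range L, ((C i)^2 - (C U)^2) * (T i)^2
        ≤ ∑ i ∈ Finset.range U, ((C i)^2 - (C U)^2) * (T i)^2 := by
      have hneg : ∑ i ∈ Finset.range U, (-(((C i)^2 - (C U)^2) * (T i)^2))
          ≤ ∑ i ∈ Finset.range L, (-(((C i)^2 - (C U)^2) * (T i)^2)) := by
        apply Finset.sum_le_sum_of_subset_of_nonneg hsub
        intro i hi hni
        rw [Finset.mem_range] at hi
        rw [Finset.mem_range, not_lt] at hni
        have hCi : C i ≤ C U := hanti U i hni hi
        have hCi0 : 0 ≤ C i := hC i hi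
        have hsq : (C i)^2 ≤ (C U)^2 := by nlinarith
        nlinarith [mul_nonneg (sub_nonneg.mpr hsq) (sq_nonneg (T i))]
      rw [Finset.sum_neg_distrib, Finset.sum_neg_distrib] at hneg
      linarith
    have h2 : ∑ i ∈ Finset.range U, ((C i)^2 - (C U)^2) * (T i)^2
        ≤ ∑ i ∈ Finset.range U, ((C i)^2 - (C U)^2) * G^2 := by
      apply Finset.sum_le_sum
      intro i hi
      rw [Finset.mem_range] at hi
      have hiL : i < L := lt_trans hi h
      have hCi : C U ≤ C i := hanti i U hi.le h
      have h3 : (T i)^2 ≤ G^2 := by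
        have := hTG i hiL; have := hT0 i; nlinarith
      have h4 : 0 ≤ (C i)^2 - (C U)^2 := by nlinarith
      nlinarith
    have h5 : (C U)^2 * ∑ i ∈ Finset.range L, (T i)^2 ≤ (C U)^2 * ((U:ℝ) * G^2) :=
      mul_le_mul_of_nonneg_left hTsum (sq_nonneg _)
    have h6 : ∑ i ∈ Finset.range U, ((C i)^2 - (C U)^2) * G^2
        = G^2 * ∑ i ∈ Finset.range U, (C i)^2 - (U:ℝ) * ((C U)^2 * G^2) := by
      have he : ∀ i ∈ Finset.range U, ((C i)^2 - (C U)^2) * G^2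
          = (C i)^2*G^2 - (C U)^2*G^2 := fun i _ => by ring
      rw [Finset.sum_congr rfl he, Finset.sum_sub_distrib, Finset.sum_const,
        Finset.card_range, ← Finset.sum_mul, nsmul_eq_mul]
      ring
    rw [hsplit]
    linarith

lemma key_ineq (U L : ℕ) (hU : 2 ≤ U) (hL : 1 ≤ L) :
    2*(1 + ∑ i ∈ Finset.range (min U L), ((1 - (1 - ((i:ℝ)+1)/((L:ℝ)+1))^U)⁻¹)^2)
      * (((U:ℝ)-1) * (1 - (1 - 1/((L:ℝ)+1))^U))
    ≤ 4*(U:ℝ)*(L:ℝ)*(1 + (1 - 1/((L:ℝ)+1))^U) := by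
  have hLpos : (0:ℝ) < (L:ℝ) + 1 := by positivity
  set q : ℝ := (1 - 1/((L:ℝ)+1))^U with hq
  have ha0 : (0:ℝ) ≤ 1 - 1/((L:ℝ)+1) := by
    rw [sub_nonneg, div_le_one hLpos]; linarith
  have ha1 : 1 - 1/((L:ℝ)+1) < 1 := by
    have : (0:ℝ) < 1/((L:ℝ)+1) := by positivity
    linarith
  have hq0 : 0 ≤ q := pow_nonneg ha0 U
  have hq1 : q < 1 := pow_lt_one₀ ha0 ha1 (by omega)
  set s : ℝ := 1 - q with hs
  have hspos : 0 < s := by simp only [hs]; linarith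
  have hs1 : s ≤ 1 := by simp only [hs]; linarith
  have hu2 : (2:ℝ) ≤ (U:ℝ) := by exact_mod_cast hU
  have hCle : ∀ i, i < L → (1 - (1 - ((i:ℝ)+1)/((L:ℝ)+1))^U)⁻¹ ≤ s⁻¹ ∧
      0 ≤ (1 - (1 - ((i:ℝ)+1)/((L:ℝ)+1))^U)⁻¹ := by
    intro i hi
    have hb1 : ((i:ℝ)+1)/((L:ℝ)+1) ≤ 1 := by
      rw [div_le_one hLpos]
      have : (i:ℝ) + 1 ≤ (L:ℝ) + 1 := by
        have : (i:ℝ) ≤ (L:ℝ) := by exact_mod_cast hi.le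
        linarith
      linarith
    have hbase0 : (0:ℝ) ≤ 1 - ((i:ℝ)+1)/((L:ℝ)+1) := by linarith
    have hbase_le : 1 - ((i:ℝ)+1)/((L:ℝ)+1) ≤ 1 - 1/((L:ℝ)+1) := by
      have : 1/((L:ℝ)+1) ≤ ((i:ℝ)+1)/((L:ℝ)+1) := by
        have hi0 : (0:ℝ) ≤ (i:ℝ) := i.cast_nonneg
        gcongr
        linarith
      linarith
    have hpow : (1 - ((i:ℝ)+1)/((L:ℝ)+1))^U ≤ q :=
      pow_le_pow_left₀ hbase0 hbase_le U
    have hden : s ≤ 1 - (1 - ((i:ℝ)+1)/((L:ℝ)+1))^U := by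
      simp only [hs]; linarith
    constructor
    · exact inv_anti₀ hspos hden
    · have : 0 < 1 - (1 - ((i:ℝ)+1)/((L:ℝ)+1))^U := lt_of_lt_of_le hspos hden
      positivity
  rcases eq_or_lt_of_le hL with hL1 | hL2
  · -- L = 1
    have hL1' : L = 1 := hL1.symm
    subst hL1'
    have hmin : min U 1 = 1 := min_eq_right (by omega)
    rw [hmin, Finset.sum_range_one]
    have hCeq : (1 - (1 - (((0:ℕ):ℝ)+1)/(((1:ℕ):ℝ)+1))^U)⁻¹ = s⁻¹ := by
      norm_num [hs, hq]
    rw [hCeq]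
    have hq14 : q ≤ 1/4 := by
      have : q = (1/2:ℝ)^U := by norm_num [hq]
      rw [this]
      calc (1/2:ℝ)^U ≤ (1/2:ℝ)^2 := by
            apply pow_le_pow_of_le_one (by norm_num) (by norm_num) hU
        _ = 1/4 := by norm_num
    have hSs : (s⁻¹)^2 * s^2 = 1 := by
      field_simp
    -- goal: 2*(1 + (s⁻¹)^2) * ((u-1)*s) ≤ 4*u*1*(1+q)
    have hgoal' : 2*(1 + (s⁻¹)^2) * (((U:ℝ)-1) * s) * s ≤ 4*(U:ℝ)*(1+q) * s := by
      have hexp : 2*(1 + (s⁻¹)^2) * (((U:ℝ)-1) * s) * s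
          = 2*((U:ℝ)-1)*(s^2 + (s⁻¹)^2*s^2) := by ring
      rw [hexp, hSs, hs]
      nlinarith [mul_nonneg (mul_nonneg (by linarith : (0:ℝ) ≤ (U:ℝ)) hq0)
        (by linarith : (0:ℝ) ≤ 2 - 3*q), hq0, hq14, sq_nonneg q]
    have hfin := le_of_mul_le_mul_right hgoal' hspos
    have h1 : ((1:ℕ):ℝ) = 1 := Nat.cast_one
    rw [h1]
    linarith
  · -- L ≥ 2
    have hL2' : 2 ≤ L := hL2
    have hks := key_sum U L hU hL2'
    set Ssum : ℝ := ∑ i ∈ Finset.range (min U L), ((1 - (1 - ((i:ℝ)+1)/((L:ℝ)+1))^U)⁻¹)^2 with hSsum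
    have hSbound : Ssum * s ≤ 2*(L:ℝ) - 1 := by
      have h1 : Ssum ≤ s⁻¹ * ∑ i ∈ Finset.range (min U L), (1 - (1 - ((i:ℝ)+1)/((L:ℝ)+1))^U)⁻¹ := by
        rw [hSsum, Finset.mul_sum]
        apply Finset.sum_le_sum
        intro i hi
        rw [Finset.mem_range] at hi
        have hiL : i < L := lt_of_lt_of_le hi (min_le_right _ _)
        obtain ⟨hle, hnn⟩ := hCle i hiL
        calc ((1 - (1 - ((i:ℝ)+1)/((L:ℝ)+1))^U)⁻¹)^2
            = (1 - (1 - ((i:ℝ)+1)/((L:ℝ)+1))^U)⁻¹ * (1 - (1 - ((i:ℝ)+1)/((L:ℝ)+1))^U)⁻¹ := sq _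
          _ ≤ s⁻¹ * (1 - (1 - ((i:ℝ)+1)/((L:ℝ)+1))^U)⁻¹ := by
              apply mul_le_mul_of_nonneg_right hle hnn
      have h2 : s⁻¹ * ∑ i ∈ Finset.range (min U L), (1 - (1 - ((i:ℝ)+1)/((L:ℝ)+1))^U)⁻¹
          ≤ s⁻¹ * (2*(L:ℝ)-1) := by
        apply mul_le_mul_of_nonneg_left hks (by positivity)
      have h3 : Ssum ≤ s⁻¹ * (2*(L:ℝ)-1) := le_trans h1 h2
      calc Ssum * s ≤ (s⁻¹ * (2*(L:ℝ)-1)) * s := by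
            apply mul_le_mul_of_nonneg_right h3 hspos.le
        _ = 2*(L:ℝ)-1 := by field_simp
    have hS0 : 0 ≤ Ssum := by
      rw [hSsum]; apply Finset.sum_nonneg; intro i _; positivity
    have hL2r : (2:ℝ) ≤ (L:ℝ) := by exact_mod_cast hL2'
    nlinarith [mul_le_mul_of_nonneg_left hSbound (by linarith : (0:ℝ) ≤ (U:ℝ)-1),
      mul_nonneg (mul_nonneg (by linarith : (0:ℝ) ≤ 4*(U:ℝ)) (by linarith : (0:ℝ) ≤ (L:ℝ))) hq0]

lemma C_facts (U L : ℕ) (hU : 1 ≤ U) (i j : ℕ) (hij : i ≤ j) (hj : j < L) :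
    0 < 1 - (1 - ((j:ℝ)+1)/((L:ℝ)+1))^U ∧
    (1 - (1 - ((j:ℝ)+1)/((L:ℝ)+1))^U)⁻¹ ≤ (1 - (1 - ((i:ℝ)+1)/((L:ℝ)+1))^U)⁻¹ := by
  have hLpos : (0:ℝ) < (L:ℝ) + 1 := by positivity
  have hbj0 : (0:ℝ) ≤ 1 - ((j:ℝ)+1)/((L:ℝ)+1) := by
    rw [sub_nonneg, div_le_one hLpos]
    have : (j:ℝ) + 1 ≤ (L:ℝ) + 1 := by
      have : (j:ℝ) ≤ (L:ℝ) := by exact_mod_cast hj.le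
      linarith
    linarith
  have hba : 1 - ((j:ℝ)+1)/((L:ℝ)+1) ≤ 1 - ((i:ℝ)+1)/((L:ℝ)+1) := by
    have : ((i:ℝ)+1)/((L:ℝ)+1) ≤ ((j:ℝ)+1)/((L:ℝ)+1) := by
      gcongr
    linarith
  have hbi1 : 1 - ((i:ℝ)+1)/((L:ℝ)+1) < 1 := by
    have : (0:ℝ) < ((i:ℝ)+1)/((L:ℝ)+1) := by positivity
    linarith
  have hpowle : (1 - ((j:ℝ)+1)/((L:ℝ)+1))^U ≤ (1 - ((i:ℝ)+1)/((L:ℝ)+1))^U :=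
    pow_le_pow_left₀ hbj0 hba U
  have hpowlt : (1 - ((i:ℝ)+1)/((L:ℝ)+1))^U < 1 :=
    pow_lt_one₀ (le_trans hbj0 hba) hbi1 (by omega)
  have h1 : 0 < 1 - (1 - ((i:ℝ)+1)/((L:ℝ)+1))^U := by linarith
  have h2 : 0 < 1 - (1 - ((j:ℝ)+1)/((L:ℝ)+1))^U := by linarith
  exact ⟨h2, inv_anti₀ h1 (by linarith)⟩

set_option maxHeartbeats 1000000 in
/-- **Lemma 3 (bounded variance of SALF).**
Let `U ≥ 2`, `L ≥ 1`, and let `d 1, …, d U` be independent random variables, uniform on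
`{1, …, L+1}`; for a layer `l` (indexed by `Fin L`, layer number `l+1`) set
`S_l = {u : d u ≤ l+1}` and `p_l = (1 − (l+1)/(L+1))^U`.  The model space is a product
`H 0 × ⋯ × H (L-1)` of real inner product spaces with `‖v‖² = ∑ l, ‖v l‖²`.  Let `w` be
the current global model and `g u` the local stochastic gradients with `‖g u‖ ≤ G`
(i.e. `∑ l, ‖g u l‖² ≤ G²`), let `η ≥ 0`, set `w u = w − η g u` and `w̄ = (1/U) ∑ u, w u`,
and define the SALF estimator layer-wise by `w̃ l = w l` if `S_l = ∅` and
`w̃ l = (1/(1 − p_l))((1/|S_l|) ∑_{u∈S_l} w u l − p_l (w l))` otherwise.  Then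
`E[‖w̃ − w̄‖²] ≤ η² (4ULG²/(U − 1)) (1 + (1 − 1/(L+1))^U)/(1 − (1 − 1/(L+1))^U)`. -/
theorem salf_global_estimator_variance_le
    {Ω : Type*} [MeasurableSpace Ω] (μ : Measure Ω) [IsProbabilityMeasure μ]
    (U L : ℕ) (hU : 2 ≤ U) (hL : 1 ≤ L)
    {H : Fin L → Type*} [∀ l, NormedAddCommGroup (H l)] [∀ l, InnerProductSpace ℝ (H l)]
    (d : Fin U → Ω → ℕ)
    (hd_meas : ∀ u, Measurable (d u))
    (hd_indep : iIndepFun d μ)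
    (hd_unif : ∀ u, ∀ k ∈ Finset.Icc 1 (L + 1),
      μ {ω | d u ω = k} = ((L : ℝ≥0∞) + 1)⁻¹)
    (Sl : Fin L → Ω → Finset (Fin U))
    (hSl : ∀ l ω, Sl l ω = Finset.univ.filter fun u => d u ω ≤ (l : ℕ) + 1)
    (p : Fin L → ℝ)
    (hp : ∀ l, p l = (1 - ((l : ℕ) + 1 : ℝ) / ((L : ℝ) + 1)) ^ U)
    (G : ℝ) (hG : 0 ≤ G) (η : ℝ) (hη : 0 ≤ η)
    (w : ∀ l, H l) (g : Fin U → ∀ l, H l)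
    (hg : ∀ u, ∑ l, ‖g u l‖ ^ 2 ≤ G ^ 2)
    (wloc : Fin U → ∀ l, H l) (hwloc : ∀ u l, wloc u l = w l - η • g u l)
    (wbar : ∀ l, H l) (hwbar : ∀ l, wbar l = (U : ℝ)⁻¹ • ∑ u, wloc u l)
    (wt : Ω → ∀ l, H l)
    (hwt : ∀ ω l, wt ω l = if Sl l ω = ∅ then w l
      else (1 - p l)⁻¹ • (((Sl l ω).card : ℝ)⁻¹ • (∑ u ∈ Sl l ω, wloc u l) - p l • w l)) :
    ∫ ω, ∑ l, ‖wt ω l - wbar l‖ ^ 2 ∂μ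
      ≤ η ^ 2 * (4 * (U : ℝ) * (L : ℝ) * G ^ 2 / ((U : ℝ) - 1))
        * ((1 + (1 - 1 / ((L : ℝ) + 1)) ^ U) / (1 - (1 - 1 / ((L : ℝ) + 1)) ^ U)) := by
  have hU0 : (0:ℝ) < (U:ℝ) := by positivity
  have hu2 : (2:ℝ) ≤ (U:ℝ) := by exact_mod_cast hU
  have hLpos : (0:ℝ) < (L:ℝ) + 1 := by positivity
  -- q and s
  set q : ℝ := (1 - 1/((L:ℝ)+1))^U with hq
  have ha0 : (0:ℝ) ≤ 1 - 1/((L:ℝ)+1) := by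
    rw [sub_nonneg, div_le_one hLpos]; linarith
  have ha1 : 1 - 1/((L:ℝ)+1) < 1 := by
    have : (0:ℝ) < 1/((L:ℝ)+1) := by positivity
    linarith
  have hq0 : 0 ≤ q := pow_nonneg ha0 U
  have hq1 : q < 1 := pow_lt_one₀ ha0 ha1 (by omega)
  have hspos : (0:ℝ) < 1 - q := by linarith
  -- denominators for each layer
  have hden : ∀ l : Fin L, 0 < 1 - p l := by
    intro l
    rw [hp l]
    exact (C_facts U L (by omega) l l le_rfl l.isLt).1
  -- average gradient
  set gbar : ∀ l, H l := fun l => (U:ℝ)⁻¹ • ∑ u, g u l with hgbar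
  have hwbar' : ∀ l, wbar l = w l - η • gbar l := by
    intro l
    rw [hwbar]
    have hsum : ∑ u, wloc u l = U • w l - η • ∑ u, g u l := by
      simp only [hwloc]
      rw [Finset.sum_sub_distrib, Finset.sum_const, Finset.card_univ, Fintype.card_fin,
        ← Finset.smul_sum]
    rw [hsum, hgbar]
    rw [smul_sub, ← Nat.cast_smul_eq_nsmul ℝ U (w l), smul_smul,
      inv_mul_cancel₀ (ne_of_gt hU0), one_smul, smul_comm]
  -- layerwise max gradient norm
  have hNU : Nonempty (Fin U) := ⟨⟨0, by omega⟩⟩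
  have hUne : (Finset.univ : Finset (Fin U)).Nonempty := Finset.univ_nonempty
  set t : Fin L → ℝ := fun l => Finset.univ.sup' hUne (fun u => ‖g u l‖) with ht
  have ht0 : ∀ l, 0 ≤ t l := by
    intro l
    obtain ⟨u0⟩ := hNU
    exact le_trans (norm_nonneg (g u0 l))
      (Finset.le_sup' (fun u => ‖g u l‖) (Finset.mem_univ u0))
  have hgG : ∀ u (l : Fin L), ‖g u l‖ ≤ G := by
    intro u l
    have h1 : ‖g u l‖^2 ≤ G^2 := by
      refine le_trans ?_ (hg u)
      exact Finset.single_le_sum (f := fun l' => ‖g u l'‖^2)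
        (fun l' _ => sq_nonneg _) (Finset.mem_univ l)
    nlinarith [norm_nonneg (g u l)]
  have htG : ∀ l, t l ≤ G := by
    intro l
    exact Finset.sup'_le _ _ fun u _ => hgG u l
  have htsum : ∑ l, (t l)^2 ≤ (U:ℝ) * G^2 := by
    have h1 : ∀ l : Fin L, (t l)^2 ≤ ∑ u, ‖g u l‖^2 := by
      intro l
      obtain ⟨u0, _, hu0⟩ := Finset.exists_mem_eq_sup' hUne (fun u => ‖g u l‖)
      have heq : t l = ‖g u0 l‖ := hu0
      rw [heq]
      exact Finset.single_le_sum (f := fun u => ‖g u l‖^2)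
        (fun u _ => sq_nonneg _) (Finset.mem_univ u0)
    calc ∑ l, (t l)^2 ≤ ∑ l, ∑ u, ‖g u l‖^2 := Finset.sum_le_sum fun l _ => h1 l
      _ = ∑ u, ∑ l, ‖g u l‖^2 := Finset.sum_comm
      _ ≤ ∑ _u : Fin U, G^2 := Finset.sum_le_sum fun u _ => hg u
      _ = (U:ℝ) * G^2 := by
          rw [Finset.sum_const, Finset.card_univ, Fintype.card_fin, nsmul_eq_mul]
  -- sum of squared norms of gbar
  have hgbarsum : ∑ l, ‖gbar l‖^2 ≤ G^2 := by
    have h1 : ∀ l : Fin L, ‖gbar l‖^2 ≤ (U:ℝ)⁻¹ * ∑ u, ‖g u l‖^2 := by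
      intro l
      have h2 : ‖gbar l‖ = (U:ℝ)⁻¹ * ‖∑ u, g u l‖ := by
        rw [hgbar, norm_smul, Real.norm_eq_abs, abs_of_nonneg (by positivity)]
      have h3 : ‖∑ u, g u l‖ ≤ ∑ u, ‖g u l‖ := norm_sum_le _ _
      have h4 : (∑ u, ‖g u l‖)^2 ≤ (U:ℝ) * ∑ u, ‖g u l‖^2 := by
        have := sq_sum_le_card_mul_sum_sq (s := Finset.univ) (f := fun u => ‖g u l‖)
        simpa [Finset.card_univ] using this
      have h5 : ‖gbar l‖^2 = ((U:ℝ)⁻¹)^2 * ‖∑ u, g u l‖^2 := by rw [h2]; ring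
      have h6 : ‖∑ u, g u l‖^2 ≤ (∑ u, ‖g u l‖)^2 := by
        apply pow_le_pow_left₀ (norm_nonneg _) h3
      have h7 : ((U:ℝ)⁻¹)^2 * ((U:ℝ) * ∑ u, ‖g u l‖^2) = (U:ℝ)⁻¹ * ∑ u, ‖g u l‖^2 := by
        field_simp
      calc ‖gbar l‖^2 = ((U:ℝ)⁻¹)^2 * ‖∑ u, g u l‖^2 := h5
        _ ≤ ((U:ℝ)⁻¹)^2 * ((U:ℝ) * ∑ u, ‖g u l‖^2) := by
            apply mul_le_mul_of_nonneg_left (le_trans h6 h4) (by positivity)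
        _ = (U:ℝ)⁻¹ * ∑ u, ‖g u l‖^2 := h7
    calc ∑ l, ‖gbar l‖^2 ≤ ∑ l, (U:ℝ)⁻¹ * ∑ u, ‖g u l‖^2 := Finset.sum_le_sum fun l _ => h1 l
      _ = (U:ℝ)⁻¹ * ∑ u, ∑ l, ‖g u l‖^2 := by rw [← Finset.mul_sum, Finset.sum_comm]
      _ ≤ (U:ℝ)⁻¹ * ∑ _u : Fin U, G^2 := by
          apply mul_le_mul_of_nonneg_left (Finset.sum_le_sum fun u _ => hg u) (by positivity)
      _ = G^2 := by
          rw [Finset.sum_const, Finset.card_univ, Fintype.card_fin, nsmul_eq_mul]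
          field_simp
  -- layerwise pointwise bound
  have hlayer : ∀ ω (l : Fin L), ‖wt ω l - wbar l‖^2
      ≤ 2*η^2*(‖gbar l‖^2 + ((1 - p l)⁻¹)^2*(t l)^2) := by
    intro ω l
    have hcl0 : 0 ≤ (1 - p l)⁻¹ := inv_nonneg.mpr (hden l).le
    by_cases hS : Sl l ω = ∅
    · have hdiff : wt ω l - wbar l = η • gbar l := by
        rw [hwt, if_pos hS, hwbar' l]
        abel
      rw [hdiff, norm_smul, Real.norm_eq_abs, abs_of_nonneg hη, mul_pow]
      nlinarith [sq_nonneg ((1 - p l)⁻¹ * t l), sq_nonneg η, sq_nonneg ‖gbar l‖,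
        mul_nonneg (sq_nonneg η) (sq_nonneg ‖gbar l‖)]
    · -- nonempty case
      have hkpos : 0 < (Sl l ω).card := Finset.card_pos.mpr (Finset.nonempty_iff_ne_empty.mpr hS)
      have hkR : (0:ℝ) < ((Sl l ω).card : ℝ) := by exact_mod_cast hkpos
      set h : H l := (((Sl l ω).card : ℝ))⁻¹ • ∑ u ∈ Sl l ω, g u l with hh
      have hdiff : wt ω l - wbar l = η • (gbar l - (1 - p l)⁻¹ • h) := by
        rw [hwt, if_neg hS, hwbar' l]
        have hsum : ∑ u ∈ Sl l ω, wloc u l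
            = (Sl l ω).card • w l - η • ∑ u ∈ Sl l ω, g u l := by
          simp only [hwloc]
          rw [Finset.sum_sub_distrib, Finset.sum_const, ← Finset.smul_sum]
        rw [hsum, hh]
        rw [← Nat.cast_smul_eq_nsmul ℝ (Sl l ω).card (w l)]
        have h1p : (1 - p l) ≠ 0 := ne_of_gt (hden l)
        have hkne : (((Sl l ω).card : ℕ) : ℝ) ≠ 0 := ne_of_gt hkR
        match_scalars <;> (field_simp; try ring)
      have hnh : ‖h‖ ≤ t l := by
        rw [hh, norm_smul, Real.norm_eq_abs, abs_of_nonneg (by positivity)]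
        have h1 : ‖∑ u ∈ Sl l ω, g u l‖ ≤ ∑ u ∈ Sl l ω, ‖g u l‖ := norm_sum_le _ _
        have h2 : ∑ u ∈ Sl l ω, ‖g u l‖ ≤ ((Sl l ω).card : ℝ) * t l := by
          have h3 : ∀ u ∈ Sl l ω, ‖g u l‖ ≤ t l := fun u _ =>
            Finset.le_sup' (fun u' => ‖g u' l‖) (Finset.mem_univ u)
          calc ∑ u ∈ Sl l ω, ‖g u l‖ ≤ ∑ _u ∈ Sl l ω, t l := Finset.sum_le_sum h3
            _ = ((Sl l ω).card : ℝ) * t l := by rw [Finset.sum_const, nsmul_eq_mul]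
        calc ((Sl l ω).card : ℝ)⁻¹ * ‖∑ u ∈ Sl l ω, g u l‖
            ≤ ((Sl l ω).card : ℝ)⁻¹ * (((Sl l ω).card : ℝ) * t l) := by
              apply mul_le_mul_of_nonneg_left (le_trans h1 h2) (by positivity)
          _ = t l := inv_mul_cancel_left₀ (ne_of_gt hkR) (t l)
      have hv : ‖gbar l - (1 - p l)⁻¹ • h‖ ≤ ‖gbar l‖ + (1 - p l)⁻¹ * t l := by
        calc ‖gbar l - (1 - p l)⁻¹ • h‖ ≤ ‖gbar l‖ + ‖(1 - p l)⁻¹ • h‖ := norm_sub_le _ _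
          _ = ‖gbar l‖ + (1 - p l)⁻¹ * ‖h‖ := by
              rw [norm_smul_of_nonneg hcl0]
          _ ≤ ‖gbar l‖ + (1 - p l)⁻¹ * t l := by
              have := mul_le_mul_of_nonneg_left hnh hcl0
              linarith
      rw [hdiff, norm_smul, Real.norm_eq_abs, abs_of_nonneg hη, mul_pow]
      have hA : 0 ≤ ‖gbar l‖ + (1 - p l)⁻¹ * t l := by
        have := mul_nonneg hcl0 (ht0 l)
        positivity
      have hsq : ‖gbar l - (1 - p l)⁻¹ • h‖^2 ≤ (‖gbar l‖ + (1 - p l)⁻¹ * t l)^2 :=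
        pow_le_pow_left₀ (norm_nonneg _) hv 2
      have hsq2 : (‖gbar l‖ + (1 - p l)⁻¹ * t l)^2
          ≤ 2*(‖gbar l‖^2 + ((1 - p l)⁻¹)^2*(t l)^2) := by
        nlinarith [sq_nonneg (‖gbar l‖ - (1 - p l)⁻¹ * t l)]
      nlinarith [sq_nonneg η, mul_le_mul_of_nonneg_left (le_trans hsq hsq2) (sq_nonneg η)]
  -- bridge to ℕ-indexed sums
  set Cn : ℕ → ℝ := fun i => (1 - (1 - ((i:ℝ)+1)/((L:ℝ)+1))^U)⁻¹ with hCn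
  set Tn : ℕ → ℝ := fun i => if hi : i < L then t ⟨i, hi⟩ else 0 with hTn
  have hbridge : ∑ l : Fin L, ((1 - p l)⁻¹)^2*(t l)^2
      = ∑ i ∈ Finset.range L, (Cn i)^2*(Tn i)^2 := by
    rw [← Fin.sum_univ_eq_sum_range (fun i => (Cn i)^2*(Tn i)^2) L]
    apply Finset.sum_congr rfl
    intro l _
    have h1 : Cn (l : ℕ) = (1 - p l)⁻¹ := by rw [hCn, hp l]
    have h2 : Tn (l : ℕ) = t l := by
      rw [hTn]
      simp [l.isLt]
    rw [h1, h2]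
  have hTsum' : ∑ i ∈ Finset.range L, (Tn i)^2 ≤ (U:ℝ) * G^2 := by
    have : ∑ i ∈ Finset.range L, (Tn i)^2 = ∑ l : Fin L, (t l)^2 := by
      rw [← Fin.sum_univ_eq_sum_range (fun i => (Tn i)^2) L]
      apply Finset.sum_congr rfl
      intro l _
      rw [hTn]
      simp [l.isLt]
    rw [this]; exact htsum
  have hrear : ∑ i ∈ Finset.range L, (Cn i)^2*(Tn i)^2
      ≤ G^2 * ∑ i ∈ Finset.range (min U L), (Cn i)^2 := by
    apply rearrange_bound L U Cn Tn G hG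
    · intro i hi
      have := (C_facts U L (by omega) i i le_rfl hi).1
      rw [hCn]
      positivity
    · intro i j hij hj
      exact (C_facts U L (by omega) i j hij hj).2
    · intro i
      rw [hTn]
      by_cases hi : i < L
      · simp only [dif_pos hi]; exact ht0 _
      · simp only [dif_neg hi]; exact le_refl 0
    · intro i hi
      rw [hTn]
      simp only [dif_pos hi]
      exact htG _
    · exact hTsum'
  -- pointwise bound by the constant
  set Ssum : ℝ := ∑ i ∈ Finset.range (min U L), (Cn i)^2 with hSsum
  have hSsum0 : 0 ≤ Ssum := by
    rw [hSsum]; apply Finset.sum_nonneg; intro i _; positivity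
  set RHS : ℝ := η ^ 2 * (4 * (U : ℝ) * (L : ℝ) * G ^ 2 / ((U : ℝ) - 1))
        * ((1 + q) / (1 - q)) with hRHS
  have hckey : 2*(1 + Ssum) ≤ 4*(U:ℝ)*(L:ℝ)*(1+q) / (((U:ℝ)-1) * (1-q)) := by
    rw [le_div_iff₀ (by nlinarith)]
    simp only [hSsum, hCn, hq]
    exact key_ineq U L hU hL
  have hpoint : ∀ ω, ∑ l, ‖wt ω l - wbar l‖^2 ≤ RHS := by
    intro ω
    have h1 : ∑ l, ‖wt ω l - wbar l‖^2
        ≤ ∑ l, 2*η^2*(‖gbar l‖^2 + ((1 - p l)⁻¹)^2*(t l)^2) :=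
      Finset.sum_le_sum fun l _ => hlayer ω l
    have h2 : ∑ l, 2*η^2*(‖gbar l‖^2 + ((1 - p l)⁻¹)^2*(t l)^2)
        = 2*η^2*(∑ l, ‖gbar l‖^2 + ∑ l : Fin L, ((1 - p l)⁻¹)^2*(t l)^2) := by
      rw [← Finset.mul_sum, Finset.sum_add_distrib]
    have h3 : ∑ l, ‖gbar l‖^2 + ∑ l : Fin L, ((1 - p l)⁻¹)^2*(t l)^2
        ≤ G^2 + G^2 * Ssum := by
      rw [hbridge]
      exact add_le_add hgbarsum hrear
    have h4 : 2*η^2*(∑ l, ‖gbar l‖^2 + ∑ l : Fin L, ((1 - p l)⁻¹)^2*(t l)^2)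
        ≤ 2*η^2*(G^2 + G^2*Ssum) := by
      apply mul_le_mul_of_nonneg_left h3 (by positivity)
    have h5 : 2*η^2*(G^2 + G^2*Ssum) = η^2*G^2*(2*(1+Ssum)) := by ring
    have h6 : η^2*G^2*(2*(1+Ssum)) ≤ η^2*G^2*(4*(U:ℝ)*(L:ℝ)*(1+q) / (((U:ℝ)-1) * (1-q))) := by
      apply mul_le_mul_of_nonneg_left hckey (by positivity)
    have h7 : η^2*G^2*(4*(U:ℝ)*(L:ℝ)*(1+q) / (((U:ℝ)-1) * (1-q))) = RHS := by
      rw [hRHS]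
      field_simp
    linarith
  have hRHS0 : 0 ≤ RHS := by
    rw [hRHS]
    apply mul_nonneg
    apply mul_nonneg (sq_nonneg η)
    · apply div_nonneg (by positivity) (by linarith)
    · apply div_nonneg (by linarith) (by linarith)
  by_cases hint : Integrable (fun ω => ∑ l, ‖wt ω l - wbar l‖^2) μ
  · calc ∫ ω, ∑ l, ‖wt ω l - wbar l‖^2 ∂μ
        ≤ ∫ _ω, RHS ∂μ := integral_mono hint (integrable_const RHS) hpoint
      _ = RHS := by simp [integral_const, measure_univ]
  · rw [integral_undef hint]
    exact hRHS0
end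

section
/- (One-round contraction of full federated averaging) Let U ≥ 1 and let F_1, …, F_U : ℝ^m → ℝ be differentiable functions, each ρ_c-strongly convex and with ρ_s-Lipschitz gradient, where 0 < ρ_c ≤ ρ_s. Let F = (1/U) Σ_{u=1}^U F_u, let w* be the minimizer of F, and let Γ = F(w*) − (1/U) Σ_u inf_v F_u(v). Fix w ∈ ℝ^m and a step size η with 0 < η ≤ 1/(4ρ_s). Let g_1, …, g_U be independent random vectors in ℝ^m with E[g_u] = ∇F_u(w) and E[‖g_u − ∇F_u(w)‖²] ≤ σ_u², and set w⁺ = w − η (1/U) Σ_{u=1}^U g_u. Then E[‖w⁺ − w*‖²] ≤ (1 − η ρ_c) ‖w − w*‖² + η² B, where B = (1/U²) Σ_{u=1}^U σ_u² + 6 ρ_s Γ. -/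
open MeasureTheory ProbabilityTheory Finset
open scoped ENNReal
open scoped RealInnerProductSpace

section fedHelpers
variable {E : Type*} [NormedAddCommGroup E] [InnerProductSpace ℝ E] [CompleteSpace E]

lemma fedX_hasDerivAt_line {f : E → ℝ} (hf : Differentiable ℝ f) (x d : E) (t : ℝ) :
    HasDerivAt (fun s : ℝ => f (x + s • d)) ⟪gradient f (x + t • d), d⟫ t := by
  have hc : HasDerivAt (fun s : ℝ => x + s • d) d t := by
    simpa using ((hasDerivAt_id t).smul_const d).const_add x
  have hfd : HasFDerivAt f (InnerProductSpace.toDual ℝ E (gradient f (x + t • d))) (x + t • d) :=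
    hasGradientAt_iff_hasFDerivAt.mp (hf (x + t • d)).hasGradientAt
  exact hfd.comp_hasDerivAt t hc

lemma fedX_convex_tangent_1d {φ : ℝ → ℝ} (hc : ConvexOn ℝ Set.univ φ) {φ' : ℝ}
    (hd : HasDerivAt φ φ' 0) : φ 0 + φ' ≤ φ 1 := by
  have h := hc.le_slope_of_hasDerivWithinAt_Ioi (Set.mem_univ (0:ℝ)) (Set.mem_univ (1:ℝ))
    one_pos hd.hasDerivWithinAt
  rw [slope_def_field] at h
  simp at h
  linarith

/-- Strong convexity first-order lower bound. -/
lemma fedX_strong_tangent {f : E → ℝ} {ρc : ℝ} (hf : Differentiable ℝ f)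
    (hc : ConvexOn ℝ Set.univ fun v => f v - ρc / 2 * ‖v‖ ^ 2) (x y : E) :
    f x + ⟪gradient f x, y - x⟫ + ρc / 2 * ‖y - x‖ ^ 2 ≤ f y := by
  set d := y - x with hd
  set φ : ℝ → ℝ := fun t => f (x + t • d) - ρc / 2 * ‖x + t • d‖ ^ 2 with hφ
  have harg : ∀ t : ℝ, (AffineMap.lineMap x y) t = x + t • d := by
    intro t
    simp only [AffineMap.lineMap_apply, vsub_eq_sub, vadd_eq_add, ← hd]
    exact add_comm _ _
  have hφc : ConvexOn ℝ Set.univ φ := by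
    have h := hc.comp_affineMap (AffineMap.lineMap x y)
    have heq : ((fun v => f v - ρc / 2 * ‖v‖ ^ 2) ∘ (AffineMap.lineMap x y)) = φ := by
      funext t
      simp only [Function.comp_apply, harg t, φ]
    rw [heq] at h
    simpa using h
  have hq : HasDerivAt (fun t : ℝ => ‖x + t • d‖ ^ 2) (2 * ⟪x, d⟫) 0 := by
    have hc0 : HasDerivAt (fun s : ℝ => x + s • d) d 0 := by
      simpa using ((hasDerivAt_id (0:ℝ)).smul_const d).const_add x
    have h2 := hc0.inner ℝ hc0
    have heq : (fun t : ℝ => ⟪x + t • d, x + t • d⟫) = fun t : ℝ => ‖x + t • d‖ ^ 2 := by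
      funext t; rw [real_inner_self_eq_norm_sq]
    rw [heq] at h2
    simpa [real_inner_comm, two_mul] using h2
  have hfd : HasDerivAt (fun t : ℝ => f (x + t • d)) ⟪gradient f x, d⟫ 0 := by
    simpa using fedX_hasDerivAt_line hf x d 0
  have hφd : HasDerivAt φ (⟪gradient f x, d⟫ - ρc / 2 * (2 * ⟪x, d⟫)) 0 :=
    hfd.sub (hq.const_mul (ρc / 2))
  have key := fedX_convex_tangent_1d hφc hφd
  have h0 : φ 0 = f x - ρc / 2 * ‖x‖ ^ 2 := by simp [φ]
  have h1 : φ 1 = f y - ρc / 2 * ‖y‖ ^ 2 := by simp [φ, d]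
  have hy : y = x + d := by simp [d]
  have hnorm : ‖y‖ ^ 2 = ‖x‖ ^ 2 + 2 * ⟪x, d⟫ + ‖d‖ ^ 2 := by
    rw [hy, norm_add_sq_real]
  rw [h0, h1, hnorm] at key
  linarith

/-- Descent lemma for functions with Lipschitz gradient. -/
lemma fedX_descent {f : E → ℝ} {ρs : ℝ} (hρs : 0 < ρs) (hf : Differentiable ℝ f)
    (hlip : ∀ a b, ‖gradient f a - gradient f b‖ ≤ ρs * ‖a - b‖) (x y : E) :
    f y ≤ f x + ⟪gradient f x, y - x⟫ + ρs / 2 * ‖y - x‖ ^ 2 := by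
  set d := y - x with hd
  set χ : ℝ → ℝ := fun t => f (x + t • d) - t * ⟪gradient f x, d⟫ - ρs / 2 * t ^ 2 * ‖d‖ ^ 2
    with hχ
  have hχd : ∀ t : ℝ, HasDerivAt χ
      (⟪gradient f (x + t • d), d⟫ - ⟪gradient f x, d⟫ - ρs * t * ‖d‖ ^ 2) t := by
    intro t
    have h1 := fedX_hasDerivAt_line hf x d t
    have h2 : HasDerivAt (fun s : ℝ => s * ⟪gradient f x, d⟫) ⟪gradient f x, d⟫ t := by
      simpa using (hasDerivAt_id t).mul_const ⟪gradient f x, d⟫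
    have h3 : HasDerivAt (fun s : ℝ => ρs / 2 * s ^ 2 * ‖d‖ ^ 2) (ρs * t * ‖d‖ ^ 2) t := by
      have h4 := ((hasDerivAt_pow 2 t).const_mul (ρs / 2)).mul_const (‖d‖ ^ 2)
      exact h4.congr_deriv (by push_cast; ring)
    exact (h1.sub h2).sub h3
  have hanti : AntitoneOn χ (Set.Icc (0:ℝ) 1) := by
    apply antitoneOn_of_deriv_nonpos (convex_Icc 0 1)
    · exact fun t _ => (hχd t).differentiableAt.continuousAt.continuousWithinAt
    · intro t ht
      rw [interior_Icc] at ht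
      exact (hχd t).differentiableAt.differentiableWithinAt
    · intro t ht
      rw [interior_Icc] at ht
      rw [(hχd t).deriv]
      have h1 : ⟪gradient f (x + t • d), d⟫ - ⟪gradient f x, d⟫
          = ⟪gradient f (x + t • d) - gradient f x, d⟫ := (inner_sub_left _ _ _).symm
      have h2 := real_inner_le_norm (gradient f (x + t • d) - gradient f x) d
      have h3 := hlip (x + t • d) x
      have h4 : ‖x + t • d - x‖ = t * ‖d‖ := by
        rw [add_sub_cancel_left, norm_smul, Real.norm_eq_abs, abs_of_pos ht.1]
      rw [h4] at h3
      have h5 := mul_le_mul_of_nonneg_right h3 (norm_nonneg d)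
      have h6 : ‖d‖ ^ 2 = ‖d‖ * ‖d‖ := sq ‖d‖
      nlinarith [h2, h5]
  have key := hanti (Set.mem_Icc.2 ⟨le_refl 0, zero_le_one⟩)
    (Set.mem_Icc.2 ⟨zero_le_one, le_refl 1⟩) zero_le_one
  have h0 : χ 0 = f x := by simp [χ]
  have h1 : χ 1 = f y - ⟪gradient f x, d⟫ - ρs / 2 * ‖d‖ ^ 2 := by
    simp [χ, d]
  rw [h0, h1] at key
  linarith

/-- Quadratic lower bound yields a global lower bound involving the gradient norm. -/
lemma fedX_lower {f : E → ℝ} {ρc : ℝ} (hρc : 0 < ρc) (x v : E)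
    (hst : f x + ⟪gradient f x, v - x⟫ + ρc / 2 * ‖v - x‖ ^ 2 ≤ f v) :
    f x - ‖gradient f x‖ ^ 2 / (2 * ρc) ≤ f v := by
  have h2 : -(‖gradient f x‖ * ‖v - x‖) ≤ ⟪gradient f x, v - x⟫ := by
    have := abs_real_inner_le_norm (gradient f x) (v - x)
    cases abs_le.mp this with
    | intro hl hr => linarith
  have key : ‖gradient f x‖ * ‖v - x‖ - ρc / 2 * ‖v - x‖ ^ 2
      ≤ ‖gradient f x‖ ^ 2 / (2 * ρc) := by
    rw [le_div_iff₀ (by linarith : (0:ℝ) < 2 * ρc)]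
    nlinarith [sq_nonneg (‖gradient f x‖ - ρc * ‖v - x‖)]
  linarith

end fedHelpers

/-- Variance of a sum of independent mean-zero square-integrable random vectors. -/
lemma fedX_var_sum {Ω : Type*} [MeasurableSpace Ω] (μ : Measure Ω) [IsProbabilityMeasure μ]
    {m U : ℕ} (Y : Fin U → Ω → EuclideanSpace ℝ (Fin m))
    (hmeas : ∀ u, Measurable (Y u))
    (hindep : ∀ u v, u ≠ v → IndepFun (Y u) (Y v) μ)
    (hint : ∀ u, Integrable (Y u) μ)
    (hmean : ∀ u, ∫ ω, Y u ω ∂μ = 0)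
    (hsq : ∀ u, Integrable (fun ω => ‖Y u ω‖ ^ 2) μ) :
    ∫ ω, ‖∑ u, Y u ω‖ ^ 2 ∂μ = ∑ u, ∫ ω, ‖Y u ω‖ ^ 2 ∂μ := by
  have hIPint : ∀ u v : Fin U, Integrable (fun ω => ⟪Y u ω, Y v ω⟫) μ := by
    intro u v
    have hm : AEStronglyMeasurable (fun ω => ⟪Y u ω, Y v ω⟫) μ :=
      ((hmeas u).inner (hmeas v)).aestronglyMeasurable
    refine Integrable.mono' (((hsq u).add (hsq v)).const_mul (1/2)) hm ?_
    filter_upwards with ω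
    have h1 := abs_real_inner_le_norm (Y u ω) (Y v ω)
    have h2 : ‖Y u ω‖ * ‖Y v ω‖ ≤ (‖Y u ω‖ ^ 2 + ‖Y v ω‖ ^ 2) / 2 := by
      nlinarith [sq_nonneg (‖Y u ω‖ - ‖Y v ω‖)]
    rw [Real.norm_eq_abs]
    calc |⟪Y u ω, Y v ω⟫| ≤ ‖Y u ω‖ * ‖Y v ω‖ := h1
      _ ≤ 1/2 * (‖Y u ω‖ ^ 2 + ‖Y v ω‖ ^ 2) := by linarith
  have hexp : ∀ ω, ‖∑ u, Y u ω‖ ^ 2 = ∑ u, ∑ v, ⟪Y u ω, Y v ω⟫ := by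
    intro ω
    rw [← real_inner_self_eq_norm_sq, sum_inner]
    exact Finset.sum_congr rfl fun u _ => inner_sum _ _ _
  have hcross : ∀ u v : Fin U, u ≠ v → ∫ ω, ⟪Y u ω, Y v ω⟫ ∂μ = 0 := by
    intro u v huv
    have hco : ∀ (u : Fin U) (i : Fin m), Integrable (fun ω => Y u ω i) μ := by
      intro u i
      exact (EuclideanSpace.proj (𝕜 := ℝ) i).integrable_comp (hint u)
    have hcomean : ∀ (u : Fin U) (i : Fin m), ∫ ω, Y u ω i ∂μ = 0 := by
      intro u i
      have := (EuclideanSpace.proj (𝕜 := ℝ) i).integral_comp_comm (hint u)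
      rw [hmean u] at this
      simpa using this
    have hptwise : ∀ ω, ⟪Y u ω, Y v ω⟫ = ∑ i, Y u ω i * Y v ω i := by
      intro ω
      simp [PiLp.inner_apply, RCLike.inner_apply, conj_trivial]
      exact Finset.sum_congr rfl fun _ _ => mul_comm _ _
    have hprod_int : ∀ i : Fin m, Integrable (fun ω => Y u ω i * Y v ω i) μ := by
      intro i
      have hiind : IndepFun (fun ω => Y u ω i) (fun ω => Y v ω i) μ :=
        (hindep u v huv).comp (EuclideanSpace.proj (𝕜 := ℝ) i).measurable
          (EuclideanSpace.proj (𝕜 := ℝ) i).measurable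
      exact hiind.integrable_mul (hco u i) (hco v i)
    calc ∫ ω, ⟪Y u ω, Y v ω⟫ ∂μ = ∫ ω, ∑ i, Y u ω i * Y v ω i ∂μ := by
          simp_rw [hptwise]
      _ = ∑ i, ∫ ω, Y u ω i * Y v ω i ∂μ := integral_finset_sum _ fun i _ => hprod_int i
      _ = 0 := by
          refine Finset.sum_eq_zero fun i _ => ?_
          have hiind : IndepFun (fun ω => Y u ω i) (fun ω => Y v ω i) μ :=
            (hindep u v huv).comp (EuclideanSpace.proj (𝕜 := ℝ) i).measurable
              (EuclideanSpace.proj (𝕜 := ℝ) i).measurable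
          have := hiind.integral_mul_eq_mul_integral (hco u i).aestronglyMeasurable (hco v i).aestronglyMeasurable
          rw [show (fun ω => Y u ω i * Y v ω i) = (fun ω => Y u ω i) * fun ω => Y v ω i from rfl,
            this, hcomean u i, hcomean v i, mul_zero]
  calc ∫ ω, ‖∑ u, Y u ω‖ ^ 2 ∂μ = ∫ ω, ∑ u, ∑ v, ⟪Y u ω, Y v ω⟫ ∂μ := by simp_rw [hexp]
    _ = ∑ u, ∫ ω, ∑ v, ⟪Y u ω, Y v ω⟫ ∂μ :=
        integral_finset_sum _ fun u _ => integrable_finset_sum _ fun v _ => hIPint u v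
    _ = ∑ u, ∑ v, ∫ ω, ⟪Y u ω, Y v ω⟫ ∂μ :=
        Finset.sum_congr rfl fun u _ => integral_finset_sum _ fun v _ => hIPint u v
    _ = ∑ u, ∫ ω, ‖Y u ω‖ ^ 2 ∂μ := by
        refine Finset.sum_congr rfl fun u _ => ?_
        rw [Finset.sum_eq_single u]
        · simp_rw [real_inner_self_eq_norm_sq]
        · exact fun v _ hvu => hcross u v (Ne.symm hvu)
        · intro h; exact absurd (Finset.mem_univ u) h

set_option maxHeartbeats 1000000 in
/-- **One-round contraction of full federated averaging.**
Let `F 1, …, F U : ℝ^m → ℝ` be differentiable, `ρc`-strongly convex with `ρs`-Lipschitz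
gradients (`0 < ρc ≤ ρs`), let `F = (1/U) ∑ u, F u` with minimizer `w*`, and let
`Γ = F w* − (1/U) ∑ u, inf_v (F u v)`.  Fix `w` and `0 < η ≤ 1/(4ρs)`.  If
`g 1, …, g U` are independent random vectors with `E[g u] = ∇(F u)(w)` and
`E[‖g u − ∇(F u)(w)‖²] ≤ σ u ²`, and `w⁺ = w − η (1/U) ∑ u, g u`, then
`E[‖w⁺ − w*‖²] ≤ (1 − ηρc)‖w − w*‖² + η²B` with `B = (1/U²) ∑ u, σ u ² + 6ρsΓ`. -/
theorem fedavg_one_round_contraction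
    {Ω : Type*} [MeasurableSpace Ω] (μ : Measure Ω) [IsProbabilityMeasure μ]
    (m U : ℕ) (hU : 1 ≤ U)
    (ρc ρs : ℝ) (hρc : 0 < ρc) (hρcs : ρc ≤ ρs)
    (F : Fin U → EuclideanSpace ℝ (Fin m) → ℝ)
    (hdiff : ∀ u, Differentiable ℝ (F u))
    (hconv : ∀ u, ConvexOn ℝ Set.univ fun v => F u v - ρc / 2 * ‖v‖ ^ 2)
    (hlip : ∀ u x y, ‖gradient (F u) x - gradient (F u) y‖ ≤ ρs * ‖x - y‖)
    (Fglob : EuclideanSpace ℝ (Fin m) → ℝ)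
    (hFglob : ∀ v, Fglob v = (U : ℝ)⁻¹ * ∑ u, F u v)
    (wstar : EuclideanSpace ℝ (Fin m)) (hmin : ∀ v, Fglob wstar ≤ Fglob v)
    (Γ : ℝ) (hΓ : Γ = Fglob wstar - (U : ℝ)⁻¹ * ∑ u, ⨅ v, F u v)
    (w : EuclideanSpace ℝ (Fin m))
    (η : ℝ) (hη : 0 < η) (hη4 : η ≤ 1 / (4 * ρs))
    (g : Fin U → Ω → EuclideanSpace ℝ (Fin m))
    (hg_meas : ∀ u, Measurable (g u))
    (hg_indep : iIndepFun g μ)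
    (hg_int : ∀ u, Integrable (g u) μ)
    (hg_mean : ∀ u, ∫ ω, g u ω ∂μ = gradient (F u) w)
    (σ : Fin U → ℝ)
    (hg_var_int : ∀ u, Integrable (fun ω => ‖g u ω - gradient (F u) w‖ ^ 2) μ)
    (hg_var : ∀ u, ∫ ω, ‖g u ω - gradient (F u) w‖ ^ 2 ∂μ ≤ σ u ^ 2)
    (B : ℝ) (hB : B = ((U : ℝ) ^ 2)⁻¹ * ∑ u, σ u ^ 2 + 6 * ρs * Γ) :
    ∫ ω, ‖w - η • ((U : ℝ)⁻¹ • ∑ u, g u ω) - wstar‖ ^ 2 ∂μ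
      ≤ (1 - η * ρc) * ‖w - wstar‖ ^ 2 + η ^ 2 * B := by
  classical
  have hρs : 0 < ρs := lt_of_lt_of_le hρc hρcs
  have hUpos : (0:ℝ) < (U:ℝ) := by exact_mod_cast Nat.lt_of_lt_of_le Nat.zero_lt_one hU
  have hUne : (U:ℝ) ≠ 0 := ne_of_gt hUpos
  -- the random fluctuation
  set Y : Fin U → Ω → EuclideanSpace ℝ (Fin m) := fun u ω => g u ω - gradient (F u) w with hY
  set S : Ω → EuclideanSpace ℝ (Fin m) := fun ω => ∑ u, Y u ω with hSdef
  set gbar : EuclideanSpace ℝ (Fin m) := (U:ℝ)⁻¹ • ∑ u, gradient (F u) w with hgbar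
  set A : EuclideanSpace ℝ (Fin m) := w - wstar - η • gbar with hAdef
  set c : ℝ := η * (U:ℝ)⁻¹ with hcdef
  -- basic facts about Y and S
  have hYmeas : ∀ u, Measurable (Y u) := fun u => (hg_meas u).sub measurable_const
  have hYint : ∀ u, Integrable (Y u) μ := fun u => (hg_int u).sub (integrable_const _)
  have hYmean : ∀ u, ∫ ω, Y u ω ∂μ = 0 := by
    intro u
    rw [hY]
    rw [integral_sub (hg_int u) (integrable_const _), hg_mean u, integral_const]
    simp
  have hYindep : ∀ u v, u ≠ v → IndepFun (Y u) (Y v) μ := by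
    intro u v huv
    exact (hg_indep.indepFun huv).comp
      (measurable_id.sub_const (gradient (F u) w)) (measurable_id.sub_const (gradient (F v) w))
  have hYsq : ∀ u, Integrable (fun ω => ‖Y u ω‖ ^ 2) μ := fun u => hg_var_int u
  have hSmeas : Measurable S := Finset.measurable_sum _ fun u _ => hYmeas u
  have hSint : Integrable S μ := integrable_finset_sum _ fun u _ => hYint u
  have hSmean : ∫ ω, S ω ∂μ = 0 := by
    rw [hSdef, integral_finset_sum _ fun u _ => hYint u]
    simp [hYmean]
  have hSsq : Integrable (fun ω => ‖S ω‖ ^ 2) μ := by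
    have hm : AEStronglyMeasurable (fun ω => ‖S ω‖ ^ 2) μ :=
      ((hSmeas.norm).pow_const 2).aestronglyMeasurable
    refine Integrable.mono' ((integrable_finset_sum (μ := μ) Finset.univ
      fun u (_ : u ∈ Finset.univ) => hYsq u).const_mul (U:ℝ)) hm ?_
    filter_upwards with ω
    rw [Real.norm_eq_abs, abs_of_nonneg (sq_nonneg _)]
    have h1 : ‖S ω‖ ≤ ∑ u, ‖Y u ω‖ := norm_sum_le _ _
    have h2 : (∑ u, ‖Y u ω‖) ^ 2 ≤ (U:ℝ) * ∑ u, ‖Y u ω‖ ^ 2 := by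
      have := sq_sum_le_card_mul_sum_sq (s := Finset.univ) (f := fun u => ‖Y u ω‖)
      simpa using this
    calc ‖S ω‖ ^ 2 ≤ (∑ u, ‖Y u ω‖) ^ 2 := by
          apply pow_le_pow_left₀ (norm_nonneg _) h1
      _ ≤ (U:ℝ) * ∑ u, ‖Y u ω‖ ^ 2 := h2
  -- variance bound
  have hvar := fedX_var_sum μ Y hYmeas hYindep hYint hYmean hYsq
  have hVle : ∫ ω, ‖S ω‖ ^ 2 ∂μ ≤ ∑ u, σ u ^ 2 := by
    rw [hSdef]
    rw [hvar]
    exact Finset.sum_le_sum fun u _ => hg_var u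
  -- pointwise decomposition
  have hpt : ∀ ω, ‖w - η • ((U:ℝ)⁻¹ • ∑ u, g u ω) - wstar‖ ^ 2
      = ‖A‖ ^ 2 - 2 * (c * ⟪A, S ω⟫) + c ^ 2 * ‖S ω‖ ^ 2 := by
    intro ω
    have hsplit : ∑ u, g u ω = S ω + ∑ u, gradient (F u) w := by
      rw [hSdef, ← Finset.sum_add_distrib]
      simp [hY]
    have hdecomp : w - η • ((U:ℝ)⁻¹ • ∑ u, g u ω) - wstar = A - c • S ω := by
      rw [hsplit, hAdef, hgbar, hcdef]
      module
    rw [hdecomp, norm_sub_sq_real, real_inner_smul_right, norm_smul, Real.norm_eq_abs,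
      mul_pow, sq_abs]
  -- integral of the decomposition
  have hinnerint : Integrable (fun ω => ⟪A, S ω⟫) μ := hSint.const_inner A
  have hI : ∫ ω, ‖w - η • ((U:ℝ)⁻¹ • ∑ u, g u ω) - wstar‖ ^ 2 ∂μ
      = ‖A‖ ^ 2 + c ^ 2 * ∫ ω, ‖S ω‖ ^ 2 ∂μ := by
    have hf1 : Integrable (fun ω => ‖A‖ ^ 2 - 2 * (c * ⟪A, S ω⟫)) μ :=
      (integrable_const _).sub ((hinnerint.const_mul c).const_mul 2)
    have hf2 : Integrable (fun ω => c ^ 2 * ‖S ω‖ ^ 2) μ := hSsq.const_mul _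
    calc ∫ ω, ‖w - η • ((U:ℝ)⁻¹ • ∑ u, g u ω) - wstar‖ ^ 2 ∂μ
        = ∫ ω, (‖A‖ ^ 2 - 2 * (c * ⟪A, S ω⟫) + c ^ 2 * ‖S ω‖ ^ 2) ∂μ := by simp_rw [hpt]
      _ = (∫ ω, (‖A‖ ^ 2 - 2 * (c * ⟪A, S ω⟫)) ∂μ) + ∫ ω, c ^ 2 * ‖S ω‖ ^ 2 ∂μ :=
          integral_add hf1 hf2
      _ = ((∫ (_ : Ω), ‖A‖ ^ 2 ∂μ) - ∫ ω, 2 * (c * ⟪A, S ω⟫) ∂μ) + c ^ 2 * ∫ ω, ‖S ω‖ ^ 2 ∂μ := by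
          rw [integral_sub (integrable_const _) ((hinnerint.const_mul c).const_mul 2),
            integral_const_mul, integral_const_mul (c ^ 2)]
      _ = ‖A‖ ^ 2 + c ^ 2 * ∫ ω, ‖S ω‖ ^ 2 ∂μ := by
          rw [integral_const_mul, integral_const_mul, integral_inner hSint, hSmean,
            inner_zero_right, integral_const]
          simp
  -- deterministic analysis
  have hst : ∀ u x y, F u x + ⟪gradient (F u) x, y - x⟫ + ρc / 2 * ‖y - x‖ ^ 2 ≤ F u y :=
    fun u => fedX_strong_tangent (hdiff u) (hconv u)
  have hinf_le : ∀ u y, (⨅ v, F u v) ≤ F u y := by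
    intro u y
    have hbdd : BddBelow (Set.range (F u)) := by
      refine ⟨F u w - ‖gradient (F u) w‖ ^ 2 / (2 * ρc), ?_⟩
      rintro r ⟨v, rfl⟩
      exact fedX_lower hρc w v (hst u w v)
    exact ciInf_le hbdd y
  have hgs : ∀ u, ‖gradient (F u) w‖ ^ 2 ≤ 2 * ρs * (F u w - ⨅ v, F u v) := by
    intro u
    set G := gradient (F u) w with hG
    have hdes := fedX_descent hρs (hdiff u) (hlip u) w (w - ρs⁻¹ • G)
    have harg : (w - ρs⁻¹ • G) - w = -(ρs⁻¹ • G) := by abel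
    rw [harg, inner_neg_right, real_inner_smul_right, real_inner_self_eq_norm_sq, norm_neg,
      norm_smul, Real.norm_eq_abs, abs_of_pos (inv_pos.mpr hρs)] at hdes
    have h2 := hinf_le u (w - ρs⁻¹ • G)
    have hid : ρs / 2 * (ρs⁻¹ * ‖G‖) ^ 2 = ‖G‖ ^ 2 / (2 * ρs) := by
      field_simp
    have hid2 : ρs⁻¹ * ‖G‖ ^ 2 = 2 * (‖G‖ ^ 2 / (2 * ρs)) := by
      field_simp
    have hkey : (⨅ v, F u v) ≤ F u w - ‖G‖ ^ 2 / (2 * ρs) := by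
      rw [hid] at hdes
      linarith
    have h3 : ‖G‖ ^ 2 / (2 * ρs) ≤ F u w - ⨅ v, F u v := by linarith
    rw [div_le_iff₀ (by linarith : (0:ℝ) < 2 * ρs)] at h3
    calc ‖G‖ ^ 2 ≤ (F u w - ⨅ v, F u v) * (2 * ρs) := h3
      _ = 2 * ρs * (F u w - ⨅ v, F u v) := mul_comm _ _
  -- tangent inequality summed
  have htang : ∀ u, F u w - F u wstar + ρc / 2 * ‖w - wstar‖ ^ 2
      ≤ ⟪gradient (F u) w, w - wstar⟫ := by
    intro u
    have h := hst u w wstar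
    have h1 : wstar - w = -(w - wstar) := by abel
    rw [h1, inner_neg_right, norm_neg] at h
    linarith
  have hsum_t : Fglob w - Fglob wstar + ρc / 2 * ‖w - wstar‖ ^ 2 ≤ ⟪gbar, w - wstar⟫ := by
    have hs := Finset.sum_le_sum fun u (_ : u ∈ Finset.univ) => htang u
    rw [Finset.sum_add_distrib, Finset.sum_sub_distrib, Finset.sum_const, card_univ,
      Fintype.card_fin, nsmul_eq_mul] at hs
    have hinner : ⟪gbar, w - wstar⟫ = (U:ℝ)⁻¹ * ∑ u, ⟪gradient (F u) w, w - wstar⟫ := by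
      rw [hgbar, real_inner_smul_left, sum_inner]
    have hmul := mul_le_mul_of_nonneg_left hs (inv_nonneg.mpr hUpos.le)
    rw [hinner, hFglob w, hFglob wstar]
    have hUU : (U:ℝ)⁻¹ * ((U:ℝ) * (ρc / 2 * ‖w - wstar‖ ^ 2)) = ρc / 2 * ‖w - wstar‖ ^ 2 := by
      field_simp
    calc (U:ℝ)⁻¹ * ∑ u, F u w - (U:ℝ)⁻¹ * ∑ u, F u wstar + ρc / 2 * ‖w - wstar‖ ^ 2
        = (U:ℝ)⁻¹ * ((∑ u, F u w) - (∑ u, F u wstar) + (U:ℝ) * (ρc / 2 * ‖w - wstar‖ ^ 2)) := by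
          field_simp
      _ ≤ (U:ℝ)⁻¹ * ∑ u, ⟪gradient (F u) w, w - wstar⟫ := by
          apply mul_le_mul_of_nonneg_left _ (inv_nonneg.mpr hUpos.le)
          linarith [hs]
  -- gradient norm bound for gbar
  have hΓnn : 0 ≤ Γ := by
    rw [hΓ, hFglob wstar, sub_nonneg]
    apply mul_le_mul_of_nonneg_left _ (inv_nonneg.mpr hUpos.le)
    exact Finset.sum_le_sum fun u _ => hinf_le u wstar
  have hgbar_sq : ‖gbar‖ ^ 2 ≤ 2 * ρs * ((Fglob w - Fglob wstar) + Γ) := by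
    have h1 : ‖∑ u, gradient (F u) w‖ ≤ ∑ u, ‖gradient (F u) w‖ := norm_sum_le _ _
    have h2 : (∑ u, ‖gradient (F u) w‖) ^ 2 ≤ (U:ℝ) * ∑ u, ‖gradient (F u) w‖ ^ 2 := by
      have := sq_sum_le_card_mul_sum_sq (s := Finset.univ)
        (f := fun u : Fin U => ‖gradient (F u) w‖)
      simpa using this
    have h3 : ∑ u, ‖gradient (F u) w‖ ^ 2
        ≤ 2 * ρs * ((∑ u, F u w) - ∑ u, ⨅ v, F u v) := by
      calc ∑ u, ‖gradient (F u) w‖ ^ 2 ≤ ∑ u, 2 * ρs * (F u w - ⨅ v, F u v) :=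
            Finset.sum_le_sum fun u _ => hgs u
        _ = 2 * ρs * ((∑ u, F u w) - ∑ u, ⨅ v, F u v) := by
            rw [← Finset.mul_sum, Finset.sum_sub_distrib]
    have hgb : ‖gbar‖ ^ 2 = ((U:ℝ)⁻¹) ^ 2 * ‖∑ u, gradient (F u) w‖ ^ 2 := by
      rw [hgbar, norm_smul, Real.norm_eq_abs, abs_of_nonneg (inv_nonneg.mpr hUpos.le), mul_pow]
    have h4 : ‖∑ u, gradient (F u) w‖ ^ 2 ≤ (∑ u, ‖gradient (F u) w‖) ^ 2 :=
      pow_le_pow_left₀ (norm_nonneg _) h1 2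
    have h5 : ‖gbar‖ ^ 2 ≤ ((U:ℝ)⁻¹) ^ 2 * ((U:ℝ) * (2 * ρs * ((∑ u, F u w) - ∑ u, ⨅ v, F u v))) := by
      rw [hgb]
      apply mul_le_mul_of_nonneg_left _ (sq_nonneg _)
      calc ‖∑ u, gradient (F u) w‖ ^ 2 ≤ (∑ u, ‖gradient (F u) w‖) ^ 2 := h4
        _ ≤ (U:ℝ) * ∑ u, ‖gradient (F u) w‖ ^ 2 := h2
        _ ≤ (U:ℝ) * (2 * ρs * ((∑ u, F u w) - ∑ u, ⨅ v, F u v)) :=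
            mul_le_mul_of_nonneg_left h3 hUpos.le
    have hident : ((U:ℝ)⁻¹) ^ 2 * ((U:ℝ) * (2 * ρs * ((∑ u, F u w) - ∑ u, ⨅ v, F u v)))
        = 2 * ρs * ((U:ℝ)⁻¹ * (∑ u, F u w) - (U:ℝ)⁻¹ * ∑ u, ⨅ v, F u v) := by
      field_simp
    have hfinal : (U:ℝ)⁻¹ * (∑ u, F u w) - (U:ℝ)⁻¹ * ∑ u, ⨅ v, F u v
        = (Fglob w - Fglob wstar) + Γ := by
      rw [← hFglob w, hΓ]
      ring
    rw [hident, hfinal] at h5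
    exact h5
  -- step size facts
  have hηρs : η * ρs ≤ 1/4 := by
    have h := (le_div_iff₀ (by linarith : (0:ℝ) < 4 * ρs)).mp hη4
    linarith
  have hD : 0 ≤ Fglob w - Fglob wstar := sub_nonneg.mpr (hmin w)
  -- deterministic contraction
  have hA_sq : ‖A‖ ^ 2 ≤ (1 - η * ρc) * ‖w - wstar‖ ^ 2 + 6 * η ^ 2 * ρs * Γ := by
    have e1 : ‖A‖ ^ 2 = ‖w - wstar‖ ^ 2 - 2 * η * ⟪gbar, w - wstar⟫ + η ^ 2 * ‖gbar‖ ^ 2 := by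
      rw [hAdef, norm_sub_sq_real, real_inner_smul_right, norm_smul, Real.norm_eq_abs,
        mul_pow, sq_abs, real_inner_comm]
      ring
    have t1 : 2 * η * (Fglob w - Fglob wstar + ρc / 2 * ‖w - wstar‖ ^ 2)
        ≤ 2 * η * ⟪gbar, w - wstar⟫ :=
      mul_le_mul_of_nonneg_left hsum_t (by linarith)
    have t2 : η ^ 2 * ‖gbar‖ ^ 2 ≤ η ^ 2 * (2 * ρs * ((Fglob w - Fglob wstar) + Γ)) :=
      mul_le_mul_of_nonneg_left hgbar_sq (sq_nonneg η)
    have t3 : 0 ≤ η * (Fglob w - Fglob wstar) * (1 - η * ρs) :=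
      mul_nonneg (mul_nonneg hη.le hD) (by linarith)
    have t4 : 0 ≤ η ^ 2 * ρs * Γ := by positivity
    nlinarith [e1, t1, t2, t3, t4]
  -- put everything together
  have hBeq : c ^ 2 * (∑ u, σ u ^ 2) + 6 * η ^ 2 * ρs * Γ = η ^ 2 * B := by
    rw [hB, hcdef]
    field_simp
  have hc2 : 0 ≤ c ^ 2 := sq_nonneg c
  rw [hI]
  have hfin : c ^ 2 * ∫ ω, ‖S ω‖ ^ 2 ∂μ ≤ c ^ 2 * ∑ u, σ u ^ 2 :=
    mul_le_mul_of_nonneg_left hVle hc2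
  linarith [hA_sq, hfin, hBeq]
end
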